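/- arXiv:2512.21177 — 3 statements merged into one kernel-verified Lean document; each statement's English description precedes it below -/
import Mathlib

section
/- Let q = 2n+1 be an odd prime power with q ≡ 3 (mod 4) and let χ be a generator of the group of ℂ-valued multiplicative characters of F_q^×. Then 2^{n−1}·n·det[φ(s_i − s_j)]_{2≤i,j≤n} = ∏_{k=1}^{n−1} (J_q(φ,χ^k) − J_q(φ,χ^{−k})). -/
open Finset

/-- The quadratic character of a finite field `F`, viewed as a `ℂ`-valued
multiplicative character. -/
noncomputable def phiC (F : Type*) [Field F] [Fintype F] [DecidableEq F] : MulChar F ℂ :=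
  (quadraticChar F).ringHomComp (Int.castRingHom ℂ)

section aux

variable {F : Type*} [Field F] [Fintype F] [DecidableEq F]

/-- The reflection identity for Jacobi sums, via the substitution `x ↦ x⁻¹`. -/
lemma jacobi_refl (χ₁ χ₂ : MulChar F ℂ) :
    jacobiSum χ₁ χ₂ = χ₂ (-1) * jacobiSum ((χ₁ * χ₂)⁻¹) χ₂ := by
  rw [jacobiSum, jacobiSum, Finset.mul_sum]
  rw [← Equiv.sum_comp (Equiv.inv F) (fun x => χ₁ x * χ₂ (1 - x))]
  refine Finset.sum_congr rfl fun x _ => ?_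
  simp only [Equiv.inv_apply]
  rcases eq_or_ne x 0 with rfl | hx
  · rw [inv_zero, MulChar.map_nonunit χ₁ not_isUnit_zero,
      MulChar.map_nonunit ((χ₁ * χ₂)⁻¹) not_isUnit_zero]
    ring
  · have h1 : (1 : F) - x⁻¹ = (-1) * (1 - x) * x⁻¹ := by field_simp; ring
    rw [h1, map_mul, map_mul, MulChar.inv_apply' (χ₁ * χ₂) x, MulChar.mul_apply]
    ring

end aux

/-- Let `q = 2n+1` be an odd prime power with `q ≡ 3 (mod 4)` and `χ` a generator of the
group of `ℂ`-valued multiplicative characters of `F_q`.  Then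
`2^{n-1} · n · det [φ(s_i - s_j)]_{2 ≤ i,j ≤ n} = ∏_{k=1}^{n-1} (J_q(φ, χ^k) - J_q(φ, χ^{-k}))`,
where `s_0 = 0, s_1 = 1, s_2, …, s_n` is an enumeration of the squares of `F_q`. -/
theorem stmt15 (F : Type*) [Field F] [Fintype F] [DecidableEq F]
    (q n : ℕ) (hq : q = Fintype.card F) (hqn : q = 2 * n + 1) (hq4 : q % 4 = 3)
    (χ : MulChar F ℂ) (hχ : ∀ ψ : MulChar F ℂ, ψ ∈ Subgroup.zpowers χ)
    (s : ℕ → F) (hs0 : s 0 = 0) (hs1 : s 1 = 1)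
    (hsinj : Set.InjOn s (Set.Iic n))
    (hsim : s '' (Set.Iic n) = {x : F | IsSquare x}) :
    2 ^ (n - 1) * (n : ℂ) *
        (Matrix.of fun i j : Fin (n - 1) =>
          phiC F (s ((i : ℕ) + 2) - s ((j : ℕ) + 2))).det =
      ∏ k ∈ Finset.Icc 1 (n - 1),
        (jacobiSum (phiC F) (χ ^ (k : ℤ)) - jacobiSum (phiC F) (χ ^ (-(k : ℤ)))) := by
  classical
  -- basic numerology
  have hn1 : 1 ≤ n := by
    rcases Nat.eq_zero_or_pos n with rfl | h
    · omega
    · exact h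
  obtain ⟨m, rfl⟩ : ∃ m, n = m + 1 := ⟨n - 1, by omega⟩
  set Φ := phiC F with hΦdef
  have hcardF : Fintype.card F = 2 * (m + 1) + 1 := by omega
  have hF2 : ringChar F ≠ 2 := by
    intro h
    have := FiniteField.even_card_iff_char_two.mp h
    omega
  -- quadratic character facts
  have hΦquad : Φ.IsQuadratic := (quadraticChar_isQuadratic F).comp _
  have hΦmul : Φ * Φ = 1 := by
    have := hΦquad.sq_eq_one
    rwa [sq] at this
  have hΦne1 : Φ ≠ 1 :=
    (MulChar.ringHomComp_ne_one_iff (RingHom.injective_int _)).mpr (quadraticChar_ne_one hF2)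
  have hΦapp : ∀ x : F, Φ x = ((quadraticChar F x : ℤ) : ℂ) := fun x => rfl
  have hΦsq_one : ∀ x : F, x ≠ 0 → IsSquare x → Φ x = 1 := by
    intro x hx hsq
    rw [hΦapp, (quadraticChar_one_iff_isSquare hx).mpr hsq]
    norm_num
  have hΦnonsq : ∀ x : F, ¬ IsSquare x → Φ x = -1 := by
    intro x hx
    rw [hΦapp, quadraticChar_neg_one_iff_not_isSquare.mpr hx]
    norm_num
  have hΦneg1 : Φ (-1) = -1 := by
    rw [hΦapp, quadraticChar_neg_one hF2, ← hq, ZMod.χ₄_nat_three_mod_four hq4]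
    norm_num
  -- order of χ
  haveI : NeZero ((Monoid.exponent Fˣ : ℕ) : ℂ) :=
    ⟨Nat.cast_ne_zero.mpr Monoid.exponent_ne_zero_of_finite⟩
  have hordχ : orderOf χ = 2 * (m + 1) := by
    rw [orderOf_eq_card_of_forall_mem_zpowers hχ,
      MulChar.card_eq_card_units_of_hasEnoughRootsOfUnity F ℂ,
      Nat.card_eq_fintype_card, Fintype.card_units, hcardF]
    omega
  have hzpow1 : ∀ d : ℤ, χ ^ d = 1 ↔ ((2 * (m + 1) : ℕ) : ℤ) ∣ d := by
    intro d
    rw [← orderOf_dvd_iff_zpow_eq_one, hordχ]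
  -- Φ = χ ^ (m+1)
  have hΦχ : Φ = χ ^ (((m : ℤ) + 1)) := by
    obtain ⟨t, ht⟩ := hχ Φ
    have ht' : χ ^ t = Φ := ht
    have h2t : χ ^ (2 * t) = 1 := by
      rw [mul_comm, zpow_mul, ht']
      rw [zpow_two, hΦmul]
    obtain ⟨k, hk⟩ : ((m : ℤ) + 1) ∣ t := by
      have h := (hzpow1 (2 * t)).mp h2t
      push_cast at h
      have h' : (2 : ℤ) * ((m : ℤ) + 1) ∣ 2 * t := by
        obtain ⟨c, hc⟩ := h
        exact ⟨c, by linear_combination hc⟩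
      exact (mul_dvd_mul_iff_left (by norm_num : (2:ℤ) ≠ 0)).mp h'
    have hkodd : ¬ (2:ℤ) ∣ k := by
      rintro ⟨v, rfl⟩
      apply hΦne1
      rw [← ht']
      apply (hzpow1 t).mpr
      refine ⟨v, ?_⟩
      push_cast
      linear_combination hk
    obtain ⟨v, hv⟩ : (2:ℤ) ∣ (k - 1) := by omega
    have hdvd : ((2 * (m+1) : ℕ) : ℤ) ∣ (t - ((m:ℤ) + 1)) := by
      refine ⟨v, ?_⟩
      push_cast
      linear_combination hk + ((m:ℤ) + 1) * hv
    have hone : χ ^ (t - ((m:ℤ) + 1)) = 1 := (hzpow1 _).mpr hdvd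
    rw [zpow_sub, ht', mul_inv_eq_one] at hone
    exact hone
  -- the enumeration of nonzero squares
  set e : Fin (m + 1) → F := fun i => s (i.val + 1) with he
  have heIic : ∀ i : Fin (m+1), (i.val + 1) ∈ Set.Iic (m+1) := fun i => by
    simp [Set.mem_Iic]; omega
  have hesq : ∀ i, IsSquare (e i) := by
    intro i
    have : e i ∈ s '' Set.Iic (m+1) := ⟨i.val + 1, heIic i, rfl⟩
    rw [hsim] at this
    exact this
  have hene : ∀ i, e i ≠ 0 := by
    intro i h
    have : (i.val + 1 : ℕ) = 0 := hsinj (heIic i) (by simp [Set.mem_Iic]) (by rw [← hs0] at h; exact h)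
    omega
  have heinj : Function.Injective e := by
    intro i j h
    have := hsinj (heIic i) (heIic j) h
    ext
    omega
  have hesurj : ∀ x : F, x ≠ 0 → IsSquare x → ∃ i, e i = x := by
    intro x hx hsq
    have : x ∈ s '' Set.Iic (m+1) := by rw [hsim]; exact hsq
    obtain ⟨j, hj, rfl⟩ := this
    have hj0 : j ≠ 0 := fun h => hx (h ▸ hs0 ▸ rfl)
    refine ⟨⟨j - 1, by simp [Set.mem_Iic] at hj; omega⟩, ?_⟩
    simp only [he]
    congr 1
    simp [Set.mem_Iic] at hj
    omega
  have hΦe : ∀ i, Φ (e i) = 1 := fun i => hΦsq_one _ (hene i) (hesq i)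
  -- the transfer lemma
  have hT : ∀ f : F → ℂ, f 0 = 0 →
      ∑ i : Fin (m+1), f (e i) = ∑ x : F, f x * (1 + Φ x) / 2 := by
    intro f hf0
    have himage : ∑ x ∈ Finset.image e Finset.univ, f x * (1 + Φ x) / 2
        = ∑ x : F, f x * (1 + Φ x) / 2 := by
      refine Finset.sum_subset (Finset.subset_univ _) ?_
      intro x _ hx
      rcases eq_or_ne x 0 with rfl | hx0
      · rw [hf0]; ring
      · have : ¬ IsSquare x := by
          intro hsq
          obtain ⟨i, rfl⟩ := hesurj x hx0 hsq
          exact hx (Finset.mem_image_of_mem e (Finset.mem_univ i))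
        rw [hΦnonsq x this]
        ring
    rw [← himage, Finset.sum_image (fun i _ j _ h => heinj h)]
    refine Finset.sum_congr rfl fun i _ => ?_
    rw [hΦe i]
    ring
  -- matrices
  set M : Matrix (Fin (m+1)) (Fin (m+1)) ℂ := Matrix.of fun i j => Φ (e i - e j) with hM
  set P : Matrix (Fin (m+1)) (Fin (m+1)) ℂ := Matrix.of fun i j => (χ ^ (j : ℕ)) (e i) with hP
  set Q : Matrix (Fin (m+1)) (Fin (m+1)) ℂ := Matrix.of fun i j => ((χ ^ (i : ℕ))⁻¹) (e j) with hQ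
  set lam : (Fin (m+1)) → ℂ :=
    fun j => (jacobiSum (χ ^ (j : ℕ)) Φ + jacobiSum ((χ ^ (j : ℕ)) * Φ) Φ) / 2 with hlam
  -- nontriviality of χ^d for relevant d
  have hne_one : ∀ d : ℤ, d ≠ 0 → |d| < 2 * (m+1) → χ ^ d ≠ 1 := by
    intro d hd habs h1
    obtain ⟨c, hc⟩ := (hzpow1 d).mp h1
    rcases eq_or_ne c 0 with rfl | hc0
    · omega
    · have h1 : (1:ℤ) ≤ |c| := Int.one_le_abs hc0
      have h2 : 2*((m:ℤ)+1) * 1 ≤ 2*((m:ℤ)+1) * |c| :=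
        mul_le_mul_of_nonneg_left h1 (by positivity)
      have h3 : |d| = 2*((m:ℤ)+1) * |c| := by
        rw [hc, abs_mul, abs_of_nonneg (by positivity : (0:ℤ) ≤ ((2*(m+1) : ℕ) : ℤ))]
        push_cast
        ring
      linarith
  -- orthogonality : Q * P = (m+1) • 1
  have hQP : Q * P = ((m : ℂ) + 1) • (1 : Matrix (Fin (m+1)) (Fin (m+1)) ℂ) := by
    ext i j
    rw [Matrix.mul_apply]
    rcases eq_or_ne i j with rfl | hij
    · have : ∀ k : Fin (m+1), Q i k * P k i = 1 := by
        intro k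
        show ((χ ^ (i : ℕ))⁻¹) (e k) * (χ ^ (i : ℕ)) (e k) = 1
        rw [← MulChar.mul_apply, MulChar.inv_mul, MulChar.one_apply ((hene k).isUnit)]
      simp only [this, Finset.sum_const, Finset.card_univ, Fintype.card_fin, nsmul_eq_mul,
        mul_one, Matrix.smul_apply, Matrix.one_apply_eq, smul_eq_mul]
      push_cast
      ring
    · set ψ : MulChar F ℂ := (χ ^ (i : ℕ))⁻¹ * (χ ^ (j : ℕ)) with hψ
      have hψz : ψ = χ ^ ((j : ℤ) - (i : ℤ)) := by
        rw [hψ, zpow_sub, ← zpow_natCast χ (i : ℕ), ← zpow_natCast χ (j : ℕ)]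
        exact mul_comm _ _
      have hterm : ∀ k : Fin (m+1), Q i k * P k j = ψ (e k) := by
        intro k
        show ((χ ^ (i : ℕ))⁻¹) (e k) * (χ ^ (j : ℕ)) (e k) = ψ (e k)
        rw [hψ, MulChar.mul_apply]
      have hd1 : ψ ≠ 1 := by
        rw [hψz]
        apply hne_one
        · have : (i:ℤ) ≠ (j:ℤ) := by exact_mod_cast fun h => hij (Fin.ext (by exact_mod_cast h))
          omega
        · have hi := i.isLt
          have hj := j.isLt
          rw [abs_sub_lt_iff]
          constructor <;> [skip; skip] <;> push_cast <;> omega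
      have hd2 : ψ * Φ ≠ 1 := by
        rw [hψz, hΦχ, ← zpow_add]
        apply hne_one
        · have hi := i.isLt
          have hj := j.isLt
          have : (i:ℤ) ≠ (j:ℤ) := by exact_mod_cast fun h => hij (Fin.ext (by exact_mod_cast h))
          omega
        · have hi := i.isLt
          have hj := j.isLt
          rw [abs_lt]
          constructor <;> push_cast <;> omega
      have hψ0 : ψ (0 : F) = 0 := MulChar.map_nonunit _ (by simp)
      calc ∑ k : Fin (m+1), Q i k * P k j = ∑ k : Fin (m+1), ψ (e k) := Finset.sum_congr rfl fun k _ => hterm k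
        _ = ∑ x : F, ψ x * (1 + Φ x) / 2 := hT _ hψ0
        _ = (∑ x : F, ψ x + ∑ x : F, (ψ * Φ) x) / 2 := by
            rw [← Finset.sum_add_distrib, ← Finset.sum_div]
            congr 1
            refine Finset.sum_congr rfl fun x _ => ?_
            simp only [hψ, MulChar.mul_apply]
            ring
        _ = 0 := by
            rw [MulChar.sum_eq_zero_of_ne_one hd1, MulChar.sum_eq_zero_of_ne_one hd2]
            norm_num
        _ = (((m : ℂ) + 1) • (1 : Matrix (Fin (m+1)) (Fin (m+1)) ℂ)) i j := by
            simp [Matrix.one_apply_ne hij]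
  -- lam as a sum over F
  have hlamsum : ∀ j : Fin (m+1), lam j = ∑ x : F, Φ (1 - x) * (χ ^ (j : ℕ)) x * (1 + Φ x) / 2 := by
    intro j
    simp only [hlam]
    rw [jacobiSum, jacobiSum, ← Finset.sum_add_distrib, Finset.sum_div]
    refine Finset.sum_congr rfl fun x _ => ?_
    rw [MulChar.mul_apply]
    ring
  -- eigenvalue equation
  have hMP : M * P = P * Matrix.diagonal lam := by
    ext i j
    rw [Matrix.mul_apply, Matrix.mul_diagonal]
    have hstep1 : ∀ k : Fin (m+1), M i k * P k j = (fun x => Φ (e i - x) * (χ ^ (j : ℕ)) x) (e k) :=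
      fun k => rfl
    have hf0 : (fun x => Φ (e i - x) * (χ ^ (j : ℕ)) x) 0 = 0 := by
      simp [MulChar.map_nonunit _ (by simp : ¬ IsUnit (0:F))]
    calc ∑ k : Fin (m+1), M i k * P k j
        = ∑ x : F, Φ (e i - x) * (χ ^ (j : ℕ)) x * (1 + Φ x) / 2 := by
          rw [Finset.sum_congr rfl fun k _ => hstep1 k]
          exact hT (fun x => Φ (e i - x) * (χ ^ (j : ℕ)) x) hf0
      _ = ∑ x : F, Φ (e i - e i * x) * (χ ^ (j : ℕ)) (e i * x) * (1 + Φ (e i * x)) / 2 := by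
          rw [← Equiv.sum_comp (Equiv.mulLeft₀ (e i) (hene i))
            (fun x => Φ (e i - x) * (χ ^ (j : ℕ)) x * (1 + Φ x) / 2)]
          rfl
      _ = ∑ x : F, (χ ^ (j : ℕ)) (e i) * (Φ (1 - x) * (χ ^ (j : ℕ)) x * (1 + Φ x) / 2) := by
          refine Finset.sum_congr rfl fun x _ => ?_
          have h1 : e i - e i * x = e i * (1 - x) := by ring
          rw [h1, map_mul, map_mul, map_mul, hΦe i]
          ring
      _ = P i j * lam j := by
          rw [← Finset.mul_sum, ← hlamsum j]
          rfl
  -- evaluation of lam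
  have hlam_eval : ∀ j : Fin (m+1),
      2 * lam j = jacobiSum (χ ^ (j : ℕ)) Φ - jacobiSum ((χ ^ (j : ℕ))⁻¹) Φ := by
    intro j
    have h := jacobi_refl ((χ ^ (j : ℕ)) * Φ) Φ
    have h2 : ((χ ^ (j : ℕ)) * Φ * Φ)⁻¹ = (χ ^ (j : ℕ))⁻¹ := by
      rw [mul_assoc, hΦmul, mul_one]
    rw [h2, hΦneg1] at h
    simp only [hlam]
    rw [h]
    ring
  have hlam0 : lam 0 = 0 := by
    have := hlam_eval 0
    have h0 : ((χ : MulChar F ℂ) ^ ((0 : Fin (m+1)) : ℕ)) = 1 := by norm_num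
    rw [h0, inv_one, sub_self] at this
    exact (mul_eq_zero.mp this).resolve_left two_ne_zero
  -- invertibility of P
  have hmne : ((m : ℂ) + 1) ≠ 0 := by
    have : ((m : ℂ) + 1) = ((m + 1 : ℕ) : ℂ) := by push_cast; ring
    rw [this]
    exact Nat.cast_ne_zero.mpr (Nat.succ_ne_zero m)
  have hleft : (((m : ℂ) + 1)⁻¹ • Q) * P = 1 := by
    rw [Matrix.smul_mul, hQP, smul_smul, inv_mul_cancel₀ hmne, one_smul]
  have hPdet : IsUnit P.det := Matrix.isUnit_det_of_left_inverse hleft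
  have hPinv : P⁻¹ = ((m : ℂ) + 1)⁻¹ • Q := Matrix.inv_eq_left_inv hleft
  have hPPinv : P * P⁻¹ = 1 := Matrix.mul_nonsing_inv P hPdet
  have hPinvP : P⁻¹ * P = 1 := Matrix.nonsing_inv_mul P hPdet
  have hM_eq : M = P * Matrix.diagonal lam * P⁻¹ := by
    calc M = M * (P * P⁻¹) := by rw [hPPinv, Matrix.mul_one]
    _ = (M * P) * P⁻¹ := by rw [Matrix.mul_assoc]
    _ = P * Matrix.diagonal lam * P⁻¹ := by rw [hMP]
  -- adjugate of M
  have hadj_inv : ∀ (A : Matrix (Fin (m+1)) (Fin (m+1)) ℂ), IsUnit A.det → A.adjugate = A.det • A⁻¹ := by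
    intro A h
    rw [Matrix.inv_def, smul_smul, Ring.mul_inverse_cancel _ h, one_smul]
  have hPinvdet : IsUnit (P⁻¹).det := Matrix.isUnit_det_of_left_inverse hPPinv
  have hdet_cancel : (P⁻¹).det * P.det = 1 := by
    rw [← Matrix.det_mul, hPinvP, Matrix.det_one]
  have hadjM : M.adjugate = P * (Matrix.diagonal lam).adjugate * P⁻¹ := by
    rw [hM_eq, Matrix.adjugate_mul_distrib, Matrix.adjugate_mul_distrib,
      hadj_inv P hPdet, hadj_inv P⁻¹ hPinvdet, Matrix.nonsing_inv_nonsing_inv P hPdet]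
    rw [Matrix.mul_smul, Matrix.mul_smul, Matrix.smul_mul, smul_smul, mul_comm (P.det),
      hdet_cancel, one_smul, ← Matrix.mul_assoc]
  -- the adjugate of the diagonal matrix
  set w : (Fin (m+1)) → ℂ := fun i => ∏ j ∈ Finset.univ.erase i, lam j with hw
  have hadjD : (Matrix.diagonal lam).adjugate = Matrix.diagonal w :=
    Matrix.adjugate_diagonal lam
  have hwk : ∀ k : Fin (m+1), k ≠ 0 → w k = 0 := by
    intro k hk
    exact Finset.prod_eq_zero (Finset.mem_erase.mpr ⟨(Ne.symm hk), Finset.mem_univ _⟩) hlam0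
  have he0 : e 0 = 1 := by
    show s (0 + 1) = 1
    rw [zero_add, hs1]
  have hP00 : P 0 0 = 1 := by
    show (χ ^ ((0 : Fin (m+1)) : ℕ)) (e 0) = 1
    rw [he0]
    exact MulChar.map_one _
  have hQ00 : Q 0 0 = 1 := by
    show ((χ ^ ((0 : Fin (m+1)) : ℕ))⁻¹) (e 0) = 1
    rw [he0]
    exact MulChar.map_one _
  have hadjM00 : M.adjugate 0 0 = w 0 * ((m : ℂ) + 1)⁻¹ := by
    rw [hadjM, hadjD]
    rw [Matrix.mul_apply]
    rw [Finset.sum_eq_single 0]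
    · rw [Matrix.mul_diagonal, hP00, hPinv, Matrix.smul_apply, hQ00, smul_eq_mul]
      ring
    · intro k _ hk
      rw [Matrix.mul_diagonal, hwk k hk]
      ring
    · intro h
      exact absurd (Finset.mem_univ 0) h
  -- the adjugate entry is the minor determinant
  have hminor : M.adjugate 0 0 = (M.submatrix Fin.succ Fin.succ).det := by
    rw [Matrix.adjugate_apply, Matrix.det_succ_row_zero]
    rw [Finset.sum_eq_single 0]
    · rw [Matrix.updateRow_self]
      have h1 : ((Pi.single 0 1 : Fin (m+1) → ℂ)) 0 = 1 := by simp
      rw [h1, Fin.succAbove_zero]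
      have h2 : (M.updateRow 0 ((Pi.single 0 1 : Fin (m+1) → ℂ))).submatrix Fin.succ Fin.succ
          = M.submatrix Fin.succ Fin.succ := by
        ext i j
        simp only [Matrix.submatrix_apply]
        exact congrFun (Matrix.updateRow_ne (Fin.succ_ne_zero i)) _
      rw [h2]
      norm_num
    · intro j _ hj
      rw [Matrix.updateRow_self]
      have h2 : ((Pi.single 0 1 : Fin (m+1) → ℂ)) j = 0 := by
        simp [Pi.single_eq_of_ne hj]
      rw [h2]
      ring
    · intro h
      exact absurd (Finset.mem_univ 0) h
  -- identify the statement matrix with the minor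
  have hstmt : (Matrix.of fun i j : Fin m =>
      phiC F (s ((i : ℕ) + 2) - s ((j : ℕ) + 2))) = M.submatrix Fin.succ Fin.succ := by
    ext i j
    show Φ (s ((i : ℕ) + 2) - s ((j : ℕ) + 2)) = Φ (e i.succ - e j.succ)
    simp only [he, Fin.val_succ]
  -- product over the erased set equals the RHS product
  have hprod : ∏ j ∈ Finset.univ.erase (0 : Fin (m+1)), (2 * lam j)
      = ∏ k ∈ Finset.Icc 1 m,
        (jacobiSum Φ (χ ^ (k : ℤ)) - jacobiSum Φ (χ ^ (-(k : ℤ)))) := by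
    refine Finset.prod_nbij' (fun j => (j : ℕ)) (fun k => ⟨k % (m+1), Nat.mod_lt _ (Nat.succ_pos m)⟩) ?_ ?_ ?_ ?_ ?_
    · intro j hj
      rw [Finset.mem_erase] at hj
      have h0 : (j : ℕ) ≠ 0 := fun h => hj.1 (Fin.ext h)
      have h1 := j.isLt
      simp only [Finset.mem_Icc]
      omega
    · intro k hk
      rw [Finset.mem_Icc] at hk
      rw [Finset.mem_erase]
      refine ⟨?_, Finset.mem_univ _⟩
      intro h
      have : k % (m+1) = 0 := congrArg Fin.val h
      rw [Nat.mod_eq_of_lt (by omega)] at this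
      omega
    · intro j hj
      rw [Finset.mem_erase] at hj
      ext
      show (j : ℕ) % (m+1) = (j : ℕ)
      exact Nat.mod_eq_of_lt j.isLt
    · intro k hk
      rw [Finset.mem_Icc] at hk
      show k % (m+1) = k
      exact Nat.mod_eq_of_lt (by omega)
    · intro j hj
      show 2 * lam j = jacobiSum Φ (χ ^ (((j:ℕ) : ℕ) : ℤ)) - jacobiSum Φ (χ ^ (-(((j:ℕ) : ℕ) : ℤ)))
      rw [hlam_eval j, jacobiSum_comm (χ ^ ((j:ℕ))) Φ, jacobiSum_comm ((χ ^ ((j:ℕ)))⁻¹) Φ,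
        ← zpow_natCast χ ((j:ℕ)), ← zpow_neg]
  -- finish
  have hcard_erase : (Finset.univ.erase (0 : Fin (m+1))).card = m := by
    rw [Finset.card_erase_of_mem (Finset.mem_univ _), Finset.card_univ, Fintype.card_fin]
    omega
  have hprod2 : ∏ j ∈ Finset.univ.erase (0 : Fin (m+1)), (2 * lam j) = 2 ^ m * w 0 := by
    rw [Finset.prod_mul_distrib, Finset.prod_const, hcard_erase, hw]
  show 2 ^ m * (((m + 1 : ℕ)) : ℂ) *
      (Matrix.of fun i j : Fin m => phiC F (s ((i : ℕ) + 2) - s ((j : ℕ) + 2))).det =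
    ∏ k ∈ Finset.Icc 1 m,
      (jacobiSum (phiC F) (χ ^ ((k : ℕ) : ℤ)) - jacobiSum (phiC F) (χ ^ (-((k : ℕ) : ℤ))))
  rw [hstmt, ← hminor, hadjM00, ← hprod, hprod2]
  push_cast
  field_simp
end

section
/- Let q = 2n+1 ≥ 7 be an odd prime power with q ≡ 1 (mod 4), let χ be a generator of the group of ℂ-valued multiplicative characters of F_q^×, and let d ∈ F_q^× be a nonsquare. Then 2^{n−2}·det T_q(d) = (−1)^{(n−2)/2}·n·λ_{n/2}(d)·I_q(χ)^2. -/
set_option linter.unusedSectionVars false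
set_option linter.unusedVariables false
set_option maxHeartbeats 1000000


open Finset

/-- `I_q(χ) = ∏_{k ∈ ℤ, 0 < k < n/2} (J_q(φ, χ^k) - J_q(φ, χ^{-k}))`. -/
noncomputable def Iq {F : Type*} [Field F] [Fintype F] [DecidableEq F]
    (n : ℕ) (χ : MulChar F ℂ) : ℂ :=
  ∏ k ∈ (Finset.range n).filter fun k => 0 < k ∧ 2 * k < n,
    (jacobiSum (phiC F) (χ ^ (k : ℤ)) - jacobiSum (phiC F) (χ ^ (-(k : ℤ))))


section AuxLemmas

variable {F : Type*} [Field F] [Fintype F] [DecidableEq F]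

lemma mulchar_inv_val' (χ : MulChar F ℂ) {a : F} (ha : a ≠ 0) : χ a⁻¹ = (χ a)⁻¹ := by
  apply eq_inv_of_mul_eq_one_left
  rw [← map_mul, inv_mul_cancel₀ ha, map_one]

lemma mulchar_ne_zero' (χ : MulChar F ℂ) {a : F} (ha : a ≠ 0) : χ a ≠ 0 := by
  intro h
  have h1 : χ a * χ a⁻¹ = 1 := by rw [← map_mul, mul_inv_cancel₀ ha, map_one]
  rw [h, zero_mul] at h1
  exact zero_ne_one h1

/-- The "flip" identity for Jacobi sums: `J(χ₁, ψ) = χ₁(-1) * J(χ₁, (χ₁ψ)⁻¹)`. -/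
lemma jacobiSum_flip' (χ₁ ψ : MulChar F ℂ) :
    jacobiSum χ₁ ψ = χ₁ (-1) * jacobiSum χ₁ (χ₁ * ψ)⁻¹ := by
  have he : χ₁ (-1) * χ₁ (-1) = 1 := by rw [← map_mul]; norm_num
  have he' : (χ₁ (-1))⁻¹ = χ₁ (-1) := inv_eq_of_mul_eq_one_right he
  have hz : ∀ ρ : MulChar F ℂ, ρ (0 : F) = 0 := fun ρ => ρ.map_zero
  rw [jacobiSum, jacobiSum, mul_comm (χ₁ (-1)), Finset.sum_mul]
  rw [← Finset.sum_erase (f := fun x => χ₁ x * ψ (1 - x)) univ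
      (show χ₁ 1 * ψ (1 - (1:F)) = 0 by rw [sub_self, hz, mul_zero]),
    ← Finset.sum_erase (f := fun x => χ₁ x * (χ₁ * ψ)⁻¹ (1 - x) * χ₁ (-1)) univ
      (show χ₁ 1 * (χ₁ * ψ)⁻¹ (1 - (1:F)) * χ₁ (-1) = 0 by
        rw [sub_self, hz, mul_zero, zero_mul])]
  have hmem : ∀ a ∈ univ.erase (1:F), a / (a - 1) ∈ univ.erase (1:F) := by
    intro x hx
    simp only [mem_erase, mem_univ, and_true] at hx ⊢
    intro h
    have hx1 : x - 1 ≠ 0 := sub_ne_zero.mpr hx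
    rw [div_eq_iff hx1, one_mul] at h
    exact one_ne_zero (α := F) (by linear_combination h)
  have hinv : ∀ a ∈ univ.erase (1:F), a / (a - 1) / (a / (a - 1) - 1) = a := by
    intro x hx
    simp only [mem_erase, mem_univ, and_true] at hx
    have hx1 : x - 1 ≠ 0 := sub_ne_zero.mpr hx
    have h2 : x / (x - 1) - 1 = 1 / (x - 1) := by field_simp; ring
    rw [h2]
    field_simp
  apply Finset.sum_nbij' (i := fun x => x / (x - 1)) (j := fun x => x / (x - 1))
    hmem hmem hinv hinv
  intro x hx
  simp only [mem_erase, mem_univ, and_true] at hx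
  have hx1 : x - 1 ≠ 0 := sub_ne_zero.mpr hx
  have h2 : (1 : F) - x ≠ 0 := fun h => hx (by linear_combination -h)
  have h1s : 1 - x/(x-1) = (1 - x)⁻¹ := by field_simp; ring
  have hb : χ₁ (1-x) ≠ 0 := mulchar_ne_zero' χ₁ h2
  rw [h1s, div_eq_mul_inv, map_mul, mulchar_inv_val' χ₁ hx1,
    mulchar_inv_val' ((χ₁ * ψ)⁻¹) h2, MulChar.inv_apply_eq_inv', MulChar.mul_apply,
    show x - 1 = (-1) * (1 - x) by ring, map_mul, inv_inv, mul_inv, he']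
  field_simp
  linear_combination (-(χ₁ x * ψ (1 - x))) * he

/-- Substitution `x ↦ -d⁻¹ x` in a character sum. -/
lemma sum_shift_char' (χ₁ ψ : MulChar F ℂ) {d : F} (hd : d ≠ 0) :
    ∑ x : F, χ₁ (1 + d * x) * ψ x = ψ (-d⁻¹) * jacobiSum ψ χ₁ := by
  rw [jacobiSum, Finset.mul_sum]
  apply Fintype.sum_equiv (Equiv.mulLeft₀ (-d : F) (neg_ne_zero.mpr hd))
  intro x
  show χ₁ (1 + d * x) * ψ x = ψ (-d⁻¹) * (ψ (-d * x) * χ₁ (1 - -d * x))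
  rw [show (1 : F) - -d * x = 1 + d * x by ring, ← mul_assoc, ← map_mul,
    show (-d⁻¹) * (-d * x) = x by field_simp]
  ring

lemma phiC_apply' (x : F) : phiC F x = ((quadraticChar F x : ℤ) : ℂ) := rfl

lemma phiC_zero' : phiC F 0 = 0 := by
  rw [phiC_apply', quadraticChar_zero]; norm_num

lemma phiC_eq_one' {x : F} (hx : x ≠ 0) (hsq : IsSquare x) : phiC F x = 1 := by
  rw [phiC_apply', (quadraticChar_one_iff_isSquare hx).mpr hsq]; norm_num

lemma phiC_eq_neg_one' {x : F} (hsq : ¬ IsSquare x) : phiC F x = -1 := by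
  rw [phiC_apply', quadraticChar_neg_one_iff_not_isSquare.mpr hsq]; norm_num

/-- Counting: sum over all `x` weighted by `1 + φ(x)` equals twice the sum over
nonzero squares plus the term at 0. -/
lemma sum_one_add_phi' (f : F → ℂ) :
    ∑ x : F, (1 + phiC F x) * f x =
      2 * (∑ t ∈ univ.filter (fun x : F => IsSquare x ∧ x ≠ 0), f t) + f 0 := by
  classical
  rw [← Finset.sum_filter_add_sum_filter_not univ (fun x : F => IsSquare x ∧ x ≠ 0)]
  congr 1
  · rw [Finset.mul_sum]
    apply Finset.sum_congr rfl
    intro x hx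
    simp only [mem_filter, mem_univ, true_and] at hx
    rw [phiC_eq_one' hx.2 hx.1]
    ring
  · have h0 : ∑ x ∈ univ.filter (fun x : F => ¬(IsSquare x ∧ x ≠ 0)),
        (1 + phiC F x) * f x = (1 + phiC F 0) * f 0 := by
      apply Finset.sum_eq_single_of_mem (0 : F)
      · simp
      · intro b hb hb0
        simp only [mem_filter, mem_univ, true_and, not_and, not_not] at hb
        have : ¬ IsSquare b := fun h => hb0 (hb h)
        rw [phiC_eq_neg_one' this]
        ring
    rw [h0, phiC_zero']
    ring

end AuxLemmas

/-- Let `q = 2n+1 ≥ 7` be an odd prime power with `q ≡ 1 (mod 4)`, `χ` a generator of the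
group of `ℂ`-valued multiplicative characters of `F_q`, and `d ∈ F_q^×` a nonsquare.  Then
`2^{n-2} · det T_q(d) = (-1)^{(n-2)/2} · n · λ_{n/2}(d) · I_q(χ)^2`, where
`T_q(d) = [φ(s_i + d s_j)]_{0 ≤ i,j ≤ n}` and `λ_k(d) = ∑_{s ∈ S_q} φ(1 + d s) χ^k(s)`. -/

theorem stmt16 (F : Type*) [Field F] [Fintype F] [DecidableEq F]
    (q n : ℕ) (hq : q = Fintype.card F) (hqn : q = 2 * n + 1) (hq7 : 7 ≤ q) (hq4 : q % 4 = 1)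
    (χ : MulChar F ℂ) (hχ : ∀ ψ : MulChar F ℂ, ψ ∈ Subgroup.zpowers χ)
    (d : F) (hd : d ≠ 0) (hd' : ¬ IsSquare d)
    (s : ℕ → F) (hs0 : s 0 = 0) (hs1 : s 1 = 1)
    (hsinj : Set.InjOn s (Set.Iic n))
    (hsim : s '' (Set.Iic n) = {x : F | IsSquare x})
    (lam : ℕ → ℂ)
    (hlam : ∀ k : ℕ, lam k =
      ∑ x ∈ Finset.univ.filter fun x : F => IsSquare x, phiC F (1 + d * x) * (χ ^ k) x) :
    2 ^ (n - 2) * (Matrix.of fun i j : Fin (n + 1) =>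
        phiC F (s (i : ℕ) + d * s (j : ℕ))).det =
      (-1 : ℂ) ^ ((n - 2) / 2) * (n : ℂ) * lam (n / 2) * Iq n χ ^ 2 := by
  classical
  have hn4 : 4 ≤ n := by omega
  set m := n / 2 with hm
  have hnm : n = 2 * m := by omega
  have hcard : Fintype.card F = 2 * n + 1 := by rw [← hq, hqn]
  -- basic quadratic character facts
  have hphid : phiC F d = -1 := phiC_eq_neg_one' hd'
  have hsqneg : IsSquare (-1 : F) := by
    rw [FiniteField.isSquare_neg_one_iff, hcard, ← hqn]; omega
  have hneg1 : phiC F (-1) = 1 := phiC_eq_one' (neg_ne_zero.mpr one_ne_zero) hsqneg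
  have hdinv : ¬ IsSquare (d⁻¹ : F) := by
    rintro ⟨r, hr⟩
    exact hd' ⟨r⁻¹, by rw [← mul_inv, ← hr, inv_inv]⟩
  set u : F := -d⁻¹ with hu
  have hu0 : u ≠ 0 := by simp [hu, hd]
  have hphiu : phiC F u = -1 := by
    apply phiC_eq_neg_one'
    intro h
    exact hdinv (by simpa [hu] using hsqneg.mul h)
  -- order of χ
  haveI hnz : NeZero ((Monoid.exponent Fˣ : ℕ) : ℂ) :=
    ⟨Nat.cast_ne_zero.mpr Monoid.exponent_ne_zero_of_finite⟩
  have hcards : Nat.card (MulChar F ℂ) = 2 * n := by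
    rw [MulChar.card_eq_card_units_of_hasEnoughRootsOfUnity F ℂ, Nat.card_eq_fintype_card,
      Fintype.card_units, hcard]
    omega
  have hord : orderOf χ = 2 * n := by
    have h1 : Subgroup.zpowers χ = ⊤ := by
      rw [Subgroup.eq_top_iff']; exact hχ
    have h2 := Nat.card_zpowers χ
    rw [h1] at h2
    rw [← h2, ← hcards, Subgroup.card_top]
  have hpow_ne : ∀ j : ℕ, 0 < j → j < 2 * n → χ ^ j ≠ 1 := by
    intro j hj0 hj2 h
    have := Nat.le_of_dvd hj0 (hord ▸ orderOf_dvd_of_pow_eq_one h)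
    omega
  have hq2 : (phiC F) * (phiC F) = 1 := by
    have h2 := ((quadraticChar_isQuadratic F).comp (Int.castRingHom ℂ)).sq_eq_one
    rwa [pow_two] at h2
  have hphine1 : phiC F ≠ 1 := by
    rw [MulChar.ne_one_iff]
    refine ⟨Units.mk0 d hd, ?_⟩
    show phiC F (Units.mk0 d hd : F) ≠ 1
    rw [Units.val_mk0, hphid]
    norm_num
  have hphin : χ ^ n = phiC F := by
    obtain ⟨jz, hjz0⟩ := hχ (phiC F)
    have hjz : χ ^ jz = phiC F := hjz0
    have hdvd : ((2 * n : ℕ) : ℤ) ∣ 2 * jz := by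
      rw [← hord, orderOf_dvd_iff_zpow_eq_one, mul_comm (2:ℤ) jz, zpow_mul, hjz]
      rw [show (2:ℤ) = ((2:ℕ):ℤ) by norm_num, zpow_natCast, pow_two, hq2]
    have hndvd : ((n:ℕ) : ℤ) ∣ jz := by
      have h2 : (2:ℤ) * (n:ℤ) ∣ 2 * jz := by push_cast at hdvd ⊢; exact hdvd
      exact (mul_dvd_mul_iff_left (by norm_num : (2:ℤ) ≠ 0)).mp h2
    obtain ⟨t, ht⟩ := hndvd
    rw [ht, zpow_mul, zpow_natCast] at hjz
    have hψ2 : (χ ^ n) ^ 2 = 1 := by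
      rw [← pow_mul, mul_comm, ← hord, pow_orderOf_eq_one]
    rcases Int.even_or_odd t with ⟨r, hr⟩ | ⟨r, hr⟩
    · exfalso
      apply hphine1
      rw [← hjz, hr, show r + r = 2 * r by ring, zpow_mul,
        show (2:ℤ) = ((2:ℕ):ℤ) by norm_num, zpow_natCast, hψ2, one_zpow]
    · rw [← hjz, hr, zpow_add, zpow_mul, show (2:ℤ) = ((2:ℕ):ℤ) by norm_num,
        zpow_natCast, hψ2, one_zpow, one_mul, zpow_one]
  have hchiinj : ∀ a b : F, a ≠ 0 → b ≠ 0 → χ a = χ b → a = b := by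
    intro a b ha hb hab
    by_contra hne
    set c : F := a * b⁻¹ with hc
    have hc0 : c ≠ 0 := mul_ne_zero ha (inv_ne_zero hb)
    have hc1 : c ≠ 1 := by
      intro h
      exact hne ((mul_inv_eq_one₀ hb).mp h)
    have hχc : χ c = 1 := by
      rw [hc, map_mul, mulchar_inv_val' χ hb, hab, mul_inv_cancel₀ (mulchar_ne_zero' χ hb)]
    have hpowval : ∀ (ρ : MulChar F ℂ) (j : ℕ), (ρ ^ j) c = (ρ c) ^ j := by
      intro ρ j
      induction j with
      | zero => rw [pow_zero, pow_zero, MulChar.one_apply (isUnit_iff_ne_zero.mpr hc0)]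
      | succ i ih => rw [pow_succ, pow_succ, MulChar.mul_apply, ih]
    have hall : ∀ ψ : MulChar F ℂ, ψ c = 1 := by
      intro ψ
      obtain ⟨k, hk⟩ := hχ ψ
      rw [← hk]
      show (χ ^ k) c = 1
      rcases k with j | j
      · rw [Int.ofNat_eq_coe, zpow_natCast, hpowval, hχc, one_pow]
      · rw [zpow_negSucc, MulChar.inv_apply_eq_inv', hpowval, hχc, one_pow, inv_one]
    obtain ⟨ψ, hψ⟩ := MulChar.exists_apply_ne_one_of_hasEnoughRootsOfUnity F ℂ hc1
    exact hψ (hall ψ)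
  -- set of nonzero squares
  set G : Finset F := univ.filter (fun x : F => IsSquare x ∧ x ≠ 0) with hG
  have hsq_i : ∀ i : ℕ, i ≤ n → IsSquare (s i) := by
    intro i hi
    have : s i ∈ s '' (Set.Iic n) := ⟨i, hi, rfl⟩
    rw [hsim] at this
    exact this
  have hne_i : ∀ i : ℕ, i ≤ n → i ≠ 0 → s i ≠ 0 := by
    intro i hi hi0 h
    exact hi0 (hsinj hi (by simp : (0:ℕ) ∈ Set.Iic n) (by rw [h, hs0]))
  have hSumG : ∀ f : F → ℂ,
      (∑ l : Fin (n+1), if l = 0 then 0 else f (s (l : ℕ))) = ∑ t ∈ G, f t := by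
    intro f
    rw [show (univ : Finset (Fin (n+1))) = insert 0 ((univ : Finset (Fin (n+1))).erase 0) from
        (Finset.insert_erase (mem_univ 0)).symm,
      Finset.sum_insert (notMem_erase _ _), if_pos rfl, zero_add]
    rw [Finset.sum_congr rfl (fun l hl => if_neg (Finset.ne_of_mem_erase hl))]
    apply Finset.sum_bij (i := fun (l : Fin (n+1)) (_ : l ∈ univ.erase 0) => s (l : ℕ))
    · intro l hl
      have hl0 : (l : ℕ) ≠ 0 := fun h => Finset.ne_of_mem_erase hl (Fin.ext h)
      have hln : (l : ℕ) ≤ n := Nat.lt_succ_iff.mp l.isLt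
      simp only [hG, mem_filter, mem_univ, true_and]
      exact ⟨hsq_i _ hln, hne_i _ hln hl0⟩
    · intro l1 h1 l2 h2 h
      exact Fin.ext (hsinj (Nat.lt_succ_iff.mp l1.isLt) (Nat.lt_succ_iff.mp l2.isLt) h)
    · intro t ht
      simp only [hG, mem_filter, mem_univ, true_and] at ht
      have : t ∈ s '' (Set.Iic n) := by rw [hsim]; exact ht.1
      obtain ⟨i, hi, hit⟩ := this
      have hin : i ≤ n := Set.mem_Iic.mp hi
      refine ⟨⟨i, by omega⟩, mem_erase.mpr ⟨?_, mem_univ _⟩, hit⟩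
      intro h
      apply ht.2
      have : i = 0 := by simpa using congrArg Fin.val h
      rw [← hit, this, hs0]
    · intro l hl
      rfl
  have hlam_eq : ∀ k : ℕ, lam k = ∑ t ∈ G, phiC F (1 + d * t) * (χ ^ k) t := by
    intro k
    rw [hlam k]
    have hset : univ.filter (fun x : F => IsSquare x) = insert (0:F) G := by
      ext x
      simp only [mem_filter, mem_univ, true_and, mem_insert, hG]
      constructor
      · intro hsq
        by_cases hx : x = 0
        · exact Or.inl hx
        · exact Or.inr ⟨hsq, hx⟩
      · rintro (rfl | ⟨h1, h2⟩)
        · exact ⟨0, by ring⟩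
        · exact h1
    rw [hset, Finset.sum_insert (by simp [hG])]
    rw [(χ ^ k).map_zero, mul_zero, zero_add]
  have SQ2 : ∀ f : F → ℂ, 2 * (∑ t ∈ G, f t) = (∑ x : F, (1 + phiC F x) * f x) - f 0 := by
    intro f
    rw [sum_one_add_phi' f, hG]
    ring
  have horth : ∀ k : ℕ, 0 < k → k < n → ∑ t ∈ G, (χ ^ k) t = 0 := by
    intro k hk0 hkn
    have h2 := SQ2 (fun t => (χ ^ k) t)
    rw [(χ ^ k).map_zero, sub_zero] at h2
    have hsplit : ∑ x : F, (1 + phiC F x) * (χ ^ k) x =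
        (∑ x : F, (χ ^ k) x) + ∑ x : F, (phiC F * χ ^ k) x := by
      rw [← Finset.sum_add_distrib]
      apply Finset.sum_congr rfl
      intro x _
      rw [MulChar.mul_apply]
      ring
    rw [hsplit, MulChar.sum_eq_zero_of_ne_one (hpow_ne k hk0 (by omega)),
      show phiC F * χ ^ k = χ ^ (n + k) by rw [pow_add, hphin],
      MulChar.sum_eq_zero_of_ne_one (hpow_ne (n + k) (by omega) (by omega)), add_zero] at h2
    have := mul_eq_zero.mp h2
    simpa using this
  have hcardG : ∑ t ∈ G, (1:ℂ) = (n:ℂ) := by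
    have h := hSumG (fun _ => (1:ℂ))
    rw [← h]
    have : ∀ l : Fin (n+1), (if l = 0 then (0:ℂ) else 1) = 1 - (if l = 0 then 1 else 0) := by
      intro l
      split <;> ring
    rw [Finset.sum_congr rfl (fun l _ => this l), Finset.sum_sub_distrib, Finset.sum_const,
      Finset.sum_ite_eq' univ (0 : Fin (n+1)) (fun _ => (1:ℂ))]
    simp
  have horth0 : ∑ t ∈ G, ((χ ^ (0:ℕ)) : MulChar F ℂ) t = (n : ℂ) := by
    rw [← hcardG]
    apply Finset.sum_congr rfl
    intro t ht
    simp only [hG, mem_filter, mem_univ, true_and] at ht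
    rw [pow_zero, MulChar.one_apply (isUnit_iff_ne_zero.mpr ht.2)]
  have heigen : ∀ (k : ℕ) (a : F), a ∈ G →
      ∑ t ∈ G, phiC F (a + d * t) * (χ ^ k) t = lam k * (χ ^ k) a := by
    intro k a haG
    have ha : IsSquare a ∧ a ≠ 0 := by simpa [hG] using haG
    have hainv : IsSquare (a⁻¹ : F) := by
      obtain ⟨r, hr⟩ := ha.1
      exact ⟨r⁻¹, by rw [hr, mul_inv]⟩
    rw [hlam_eq k, Finset.sum_mul]
    apply Finset.sum_nbij' (i := fun t => a⁻¹ * t) (j := fun t => a * t)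
    · intro t ht
      simp only [hG, mem_filter, mem_univ, true_and] at ht ⊢
      exact ⟨hainv.mul ht.1, mul_ne_zero (inv_ne_zero ha.2) ht.2⟩
    · intro t ht
      simp only [hG, mem_filter, mem_univ, true_and] at ht ⊢
      exact ⟨ha.1.mul ht.1, mul_ne_zero ha.2 ht.2⟩
    · intro t ht
      rw [← mul_assoc, mul_inv_cancel₀ ha.2, one_mul]
    · intro t ht
      rw [← mul_assoc, inv_mul_cancel₀ ha.2, one_mul]
    · intro t ht
      have h1 : a + d * t = a * (1 + d * (a⁻¹ * t)) := by
        have : a * (d * (a⁻¹ * t)) = d * t := by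
          rw [mul_comm a⁻¹ t, ← mul_assoc d t a⁻¹, mul_comm a (d * t * a⁻¹), mul_assoc,
            inv_mul_cancel₀ ha.2, mul_one]
        rw [mul_add, mul_one, this]
      rw [h1, map_mul, phiC_eq_one' ha.2 ha.1, one_mul]
      rw [show (χ ^ k) t = (χ ^ k) (a⁻¹ * t) * (χ ^ k) a by
        rw [← map_mul, mul_comm a⁻¹ t, mul_assoc, inv_mul_cancel₀ ha.2, mul_one]]
      ring
  set D : ℕ → ℂ := fun k => jacobiSum (phiC F) (χ ^ k) - jacobiSum (phiC F) ((χ ^ k)⁻¹)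
    with hD
  have hkey2 : ∀ k : ℕ, 2 * lam k = (χ ^ k) u * D k := by
    intro k
    rw [hlam_eq k, SQ2 (fun t => phiC F (1 + d * t) * (χ ^ k) t)]
    rw [(χ ^ k).map_zero, mul_zero, sub_zero]
    have hsplit : ∑ x : F, (1 + phiC F x) * (phiC F (1 + d * x) * (χ ^ k) x) =
        (∑ x : F, phiC F (1 + d * x) * (χ ^ k) x) +
          ∑ x : F, phiC F (1 + d * x) * (phiC F * χ ^ k) x := by
      rw [← Finset.sum_add_distrib]
      apply Finset.sum_congr rfl
      intro x _
      rw [MulChar.mul_apply]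
      ring
    rw [hsplit, sum_shift_char' (phiC F) (χ ^ k) hd,
      sum_shift_char' (phiC F) (phiC F * χ ^ k) hd,
      jacobiSum_comm (χ ^ k) (phiC F), jacobiSum_comm (phiC F * χ ^ k) (phiC F)]
    have hJflip : jacobiSum (phiC F) (phiC F * χ ^ k) = jacobiSum (phiC F) ((χ ^ k)⁻¹) := by
      rw [jacobiSum_flip' (phiC F) (phiC F * χ ^ k), hneg1, one_mul, ← mul_assoc, hq2, one_mul]
    have hmulu : (phiC F * χ ^ k) u = -((χ ^ k) u) := by
      rw [MulChar.mul_apply, hphiu]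
      ring
    rw [hJflip, hmulu, hD]
    ring
  have hphiinv : (phiC F)⁻¹ = phiC F := inv_eq_of_mul_eq_one_left hq2
  have hDrefl : ∀ k : ℕ, k ≤ n → D (n - k) = D k := by
    intro k hk
    have hsplit : χ ^ (n - k) = phiC F * (χ ^ k)⁻¹ := by
      rw [← hphin, eq_mul_inv_iff_mul_eq, ← pow_add]
      congr 1
      omega
    have e1 : jacobiSum (phiC F) (χ ^ (n - k)) = jacobiSum (phiC F) (χ ^ k) := by
      rw [hsplit, jacobiSum_flip' (phiC F) (phiC F * (χ ^ k)⁻¹), hneg1, one_mul,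
        ← mul_assoc, hq2, one_mul, inv_inv]
    have e2 : jacobiSum (phiC F) ((χ ^ (n - k))⁻¹) = jacobiSum (phiC F) ((χ ^ k)⁻¹) := by
      rw [hsplit, mul_inv, inv_inv, hphiinv,
        jacobiSum_flip' (phiC F) (phiC F * χ ^ k), hneg1, one_mul, ← mul_assoc, hq2, one_mul]
    show jacobiSum (phiC F) (χ ^ (n-k)) - jacobiSum (phiC F) ((χ ^ (n-k))⁻¹) =
      jacobiSum (phiC F) (χ ^ k) - jacobiSum (phiC F) ((χ ^ k)⁻¹)
    rw [e1, e2]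
  have huu : ∀ k : ℕ, k ≤ n → (χ ^ k) u * (χ ^ (n - k)) u = -1 := by
    intro k hk
    rw [← MulChar.mul_apply, ← pow_add, show k + (n - k) = n by omega, hphin, hphiu]
  have hdet : (Matrix.of fun i j : Fin (n + 1) =>
      phiC F (s (i : ℕ) + d * s (j : ℕ))).det = (n : ℂ) * ∏ k ∈ Ico 1 n, lam k := by
    haveI : NeZero n := ⟨by omega⟩
    have hone : ((1 : Fin (n+1)) : ℕ) = 1 := by
      have : ((1 : Fin (n+1)) : ℕ) = 1 % (n+1) := Fin.val_one' (n+1)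
      rw [this]
      exact Nat.mod_eq_of_lt (by omega)
    have hival : ∀ i : Fin (n+1), i ≠ 0 → (i : ℕ) ≠ 0 := fun i h hh => h (Fin.ext hh)
    have hiG : ∀ i : Fin (n+1), i ≠ 0 → s (i : ℕ) ∈ G := by
      intro i hi
      have hin : (i:ℕ) ≤ n := Nat.lt_succ_iff.mp i.isLt
      simp only [hG, mem_filter, mem_univ, true_and]
      exact ⟨hsq_i _ hin, hne_i _ hin (hival i hi)⟩
    set T : Matrix (Fin (n+1)) (Fin (n+1)) ℂ :=
      Matrix.of (fun i j : Fin (n + 1) => phiC F (s (i : ℕ) + d * s (j : ℕ))) with hT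
    set v : Fin n → ℂ := fun i => χ (s ((i : ℕ) + 1)) with hv
    set P : Matrix (Fin (n+1)) (Fin (n+1)) ℂ := Matrix.of (fun i j =>
      if j = 0 then (if i = 0 then (1:ℂ) else 0)
      else if i = 0 then 0 else (χ ^ ((j:ℕ) - 1)) (s (i:ℕ))) with hP
    set A : Matrix (Fin (n+1)) (Fin (n+1)) ℂ := Matrix.of (fun i j =>
      if j = 0 then (if i = 0 then (0:ℂ) else 1)
      else if i = 0 then (if (j:ℕ) = 1 then (-(n:ℂ)) else 0)
      else lam ((j:ℕ) - 1) * (χ ^ ((j:ℕ) - 1)) (s (i:ℕ))) with hA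
    have hTP : T * P = A := by
      ext i j
      rw [Matrix.mul_apply]
      by_cases hj : j = 0
      · subst hj
        have hpt : ∀ l : Fin (n+1), T i l * P l 0 = if l = 0 then T i 0 else 0 := by
          intro l
          have : P l 0 = if l = 0 then (1:ℂ) else 0 := by simp [hP]
          rw [this]
          split_ifs with h
          · subst h; rw [mul_one]
          · rw [mul_zero]
        rw [Finset.sum_congr rfl (fun l _ => hpt l), Finset.sum_ite_eq' univ (0 : Fin (n+1)),
          if_pos (mem_univ _)]
        have hT0 : T i 0 = phiC F (s (i:ℕ)) := by
          simp only [hT, Matrix.of_apply]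
          norm_num [hs0]
        rw [hT0]
        by_cases hi : i = 0
        · subst hi
          simp only [hA, Matrix.of_apply, if_pos rfl]
          norm_num [hs0, phiC_zero']
        · have hmem := hiG i hi
          simp only [hG, mem_filter, mem_univ, true_and] at hmem
          simp only [hA, Matrix.of_apply, if_pos rfl, if_neg hi]
          exact phiC_eq_one' hmem.2 hmem.1
      · have hj0 : (j:ℕ) ≠ 0 := hival j hj
        have hjn : (j:ℕ) ≤ n := Nat.lt_succ_iff.mp j.isLt
        have hpt : ∀ l : Fin (n+1), T i l * P l j =
            if l = 0 then 0 else phiC F (s (i:ℕ) + d * s (l:ℕ)) * (χ ^ ((j:ℕ)-1)) (s (l:ℕ)) := by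
          intro l
          simp only [hT, hP, Matrix.of_apply, if_neg hj]
          split_ifs with h
          · rw [mul_zero]
          · rfl
        rw [Finset.sum_congr rfl (fun l _ => hpt l),
          hSumG (fun t => phiC F (s (i:ℕ) + d * t) * (χ ^ ((j:ℕ)-1)) t)]
        by_cases hi : i = 0
        · subst hi
          have hz0 : ((0 : Fin (n+1)) : ℕ) = 0 := rfl
          have hpt2 : ∀ t ∈ G, phiC F (s ((0 : Fin (n+1)):ℕ) + d * t) * (χ ^ ((j:ℕ)-1)) t =
              -((χ ^ ((j:ℕ)-1)) t) := by
            intro t ht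
            simp only [hG, mem_filter, mem_univ, true_and] at ht
            rw [hz0, hs0, zero_add, map_mul, hphid, phiC_eq_one' ht.2 ht.1]
            ring
          rw [Finset.sum_congr rfl hpt2, Finset.sum_neg_distrib]
          by_cases hj1 : (j:ℕ) = 1
          · rw [show (j:ℕ) - 1 = 0 by omega, horth0]
            simp [hA, hj, hj1]
          · rw [horth ((j:ℕ)-1) (by omega) (by omega), neg_zero]
            simp [hA, hj, hj1]
        · rw [heigen ((j:ℕ)-1) (s (i:ℕ)) (hiG i hi)]
          simp only [hA, Matrix.of_apply, if_neg hj, if_neg hi]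
    -- determinants
    have hsubA : (A.submatrix Fin.succ (Fin.succAbove 1)) = Matrix.of (fun (i jj : Fin n) =>
        (if jj = 0 then (1:ℂ) else lam (jj:ℕ)) * (Matrix.vandermonde v) i jj) := by
      ext i jj
      rw [Matrix.submatrix_apply]
      by_cases h : jj = 0
      · subst h
        have h1 : (Fin.succAbove 1 (0 : Fin n)) = (0 : Fin (n+1)) := by
          rw [Fin.succAbove_of_castSucc_lt]
          · exact Fin.ext rfl
          · rw [Fin.lt_def, hone]
            exact Nat.zero_lt_one
        rw [h1]
        simp [hA, Fin.succ_ne_zero, Matrix.vandermonde_apply]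
      · have hval : (jj : ℕ) ≠ 0 := fun hh => h (Fin.ext hh)
        have h2 : Fin.succAbove 1 jj = jj.succ := by
          rw [Fin.succAbove_of_le_castSucc]
          rw [Fin.le_def, hone, Fin.coe_castSucc]
          omega
        rw [h2]
        have hsne : (jj.succ : Fin (n+1)) ≠ 0 := Fin.succ_ne_zero jj
        simp only [hA, Matrix.of_apply, if_neg hsne, if_neg (Fin.succ_ne_zero i),
          if_neg h, Matrix.vandermonde_apply, Fin.val_succ]
        rw [show (jj:ℕ) + 1 - 1 = (jj:ℕ) by omega, MulChar.pow_apply' χ hval]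
    have hdetA : A.det = ((-1:ℂ) ^ (1:ℕ)) * (-(n:ℂ)) *
        ((∏ jj : Fin n, (if jj = 0 then (1:ℂ) else lam (jj:ℕ))) * (Matrix.vandermonde v).det) := by
      rw [Matrix.det_succ_row_zero, Finset.sum_eq_single (1 : Fin (n+1))]
      · have hA01 : A 0 1 = -(n:ℂ) := by
          have h10 : (1 : Fin (n+1)) ≠ 0 := by
            intro h
            have := congrArg Fin.val h
            rw [hone] at this
            exact one_ne_zero this
          simp [hA, h10, hone]
        rw [hA01, hone, hsubA, Matrix.det_mul_row]
      · intro b _ hb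
        have hA0b : A 0 b = 0 := by
          by_cases hb0 : b = 0
          · subst hb0; simp [hA]
          · have hbv : (b:ℕ) ≠ 1 := by
              intro h
              exact hb (Fin.ext (by rw [h, hone]))
            simp [hA, hb0, hbv]
        rw [hA0b, mul_zero, zero_mul]
      · intro h; exact absurd (mem_univ _) h
    have hdetP : P.det = (Matrix.vandermonde v).det := by
      rw [Matrix.det_succ_row_zero, Finset.sum_eq_single (0 : Fin (n+1))]
      · have hP00 : P 0 0 = 1 := by simp [hP]
        have hsubP : P.submatrix Fin.succ (Fin.succAbove 0) = Matrix.vandermonde v := by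
          ext i jj
          rw [Matrix.submatrix_apply, Fin.zero_succAbove]
          have hsne : (jj.succ : Fin (n+1)) ≠ 0 := Fin.succ_ne_zero jj
          simp only [hP, Matrix.of_apply, if_neg hsne, if_neg (Fin.succ_ne_zero i),
            Matrix.vandermonde_apply, Fin.val_succ]
          rw [show (jj:ℕ) + 1 - 1 = (jj:ℕ) by omega]
          by_cases hval : (jj : ℕ) = 0
          · rw [hval, pow_zero, pow_zero]
            have hsne2 : s ((i:ℕ) + 1) ≠ 0 := hne_i _ (by omega) (by omega)
            exact MulChar.one_apply (isUnit_iff_ne_zero.mpr hsne2)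
          · rw [MulChar.pow_apply' χ hval, hv]
        rw [hP00, hsubP, Fin.val_zero, pow_zero, one_mul, one_mul]
      · intro b _ hb
        have : P 0 b = 0 := by simp [hP, hb]
        rw [this, mul_zero, zero_mul]
      · intro h; exact absurd (mem_univ _) h
    have hvinj : Function.Injective v := by
      intro i1 i2 h
      have e1 := hchiinj _ _ (hne_i _ (by omega) (by omega)) (hne_i _ (by omega) (by omega)) h
      have e2 := hsinj (show ((i1:ℕ)+1) ∈ Set.Iic n by simp [Set.mem_Iic])
        (show ((i2:ℕ)+1) ∈ Set.Iic n by simp [Set.mem_Iic]) e1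
      exact Fin.ext (by omega)
    have hVne : (Matrix.vandermonde v).det ≠ 0 :=
      Matrix.det_vandermonde_ne_zero_iff.mpr hvinj
    have hdetTP := congrArg Matrix.det hTP
    rw [Matrix.det_mul, hdetP, hdetA] at hdetTP
    have hTdet : T.det = (n:ℂ) * ∏ jj : Fin n, (if jj = 0 then (1:ℂ) else lam (jj:ℕ)) := by
      apply mul_right_cancel₀ hVne
      rw [hdetTP]
      ring
    rw [hTdet]
    congr 1
    have hcongr : ∀ jj : Fin n, (if jj = 0 then (1:ℂ) else lam (jj:ℕ)) =
        (fun (k:ℕ) => if k = 0 then (1:ℂ) else lam k) (jj:ℕ) := by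
      intro jj
      by_cases h : jj = 0
      · subst h; simp
      · have hvv : (jj:ℕ) ≠ 0 := fun hh => h (Fin.ext hh)
        simp [h, hvv]
    rw [Finset.prod_congr rfl (fun jj _ => hcongr jj),
      Fin.prod_univ_eq_prod_range (fun k => if k = 0 then (1:ℂ) else lam k) n,
      Finset.range_eq_Ico, Finset.prod_eq_prod_Ico_succ_bot (by omega : 0 < n), if_pos rfl,
      one_mul]
    apply Finset.prod_congr rfl
    intro k hk
    rw [if_neg]
    simp only [mem_Ico] at hk
    omega
  have hIq : Iq n χ = ∏ k ∈ Ico 1 m, D k := by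
    have hfilter : (Finset.range n).filter (fun k => 0 < k ∧ 2 * k < n) = Ico 1 m := by
      ext k
      simp only [mem_filter, mem_range, mem_Ico]
      omega
    rw [Iq, hfilter]
    apply Finset.prod_congr rfl
    intro k _
    show _ = jacobiSum (phiC F) (χ ^ k) - jacobiSum (phiC F) ((χ ^ k)⁻¹)
    rw [zpow_natCast, zpow_neg, zpow_natCast]
  have hprod : (2:ℂ) ^ (n - 1) * ∏ k ∈ Ico 1 n, lam k =
      2 * lam m * ((-1) ^ (m - 1) * (∏ k ∈ Ico 1 m, D k) ^ 2) := by
    have hL : ∏ k ∈ Ico 1 n, ((2:ℂ) * lam k) = 2 ^ (n - 1) * ∏ k ∈ Ico 1 n, lam k := by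
      rw [Finset.prod_mul_distrib, Finset.prod_const, Nat.card_Ico]
    have hsplit1 : ∏ k ∈ Ico 1 n, ((2:ℂ) * lam k) =
        (∏ k ∈ Ico 1 m, ((2:ℂ) * lam k)) * ∏ k ∈ Ico m n, ((2:ℂ) * lam k) :=
      (Finset.prod_Ico_consecutive _ (by omega) (by omega)).symm
    have hsplit2 : ∏ k ∈ Ico m n, ((2:ℂ) * lam k) =
        (2 * lam m) * ∏ k ∈ Ico (m+1) n, ((2:ℂ) * lam k) :=
      Finset.prod_eq_prod_Ico_succ_bot (by omega) _
    have hrefl : ∏ k ∈ Ico (m+1) n, ((2:ℂ) * lam k) =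
        ∏ k ∈ Ico 1 m, ((2:ℂ) * lam (n - k)) := by
      apply Finset.prod_nbij' (i := fun k => n - k) (j := fun k => n - k)
      · intro k hk
        simp only [mem_Ico] at hk ⊢
        omega
      · intro k hk
        simp only [mem_Ico] at hk ⊢
        omega
      · intro k hk
        simp only [mem_Ico] at hk
        omega
      · intro k hk
        simp only [mem_Ico] at hk
        omega
      · intro k hk
        simp only [mem_Ico] at hk
        congr 2
        omega
    have hpair : (∏ k ∈ Ico 1 m, ((2:ℂ) * lam k)) * ∏ k ∈ Ico 1 m, ((2:ℂ) * lam (n - k)) =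
        ∏ k ∈ Ico 1 m, (-(D k ^ 2)) := by
      rw [← Finset.prod_mul_distrib]
      apply Finset.prod_congr rfl
      intro k hk
      simp only [mem_Ico] at hk
      rw [hkey2 k, hkey2 (n - k), hDrefl k (by omega)]
      have := huu k (by omega)
      linear_combination (D k * D k) * this
    have hneg : ∏ k ∈ Ico 1 m, (-(D k ^ 2)) =
        (-1:ℂ) ^ (m - 1) * (∏ k ∈ Ico 1 m, D k) ^ 2 := by
      calc ∏ k ∈ Ico 1 m, (-(D k ^ 2)) = ∏ k ∈ Ico 1 m, ((-1) * D k ^ 2) := by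
            apply Finset.prod_congr rfl
            intro k _
            ring
        _ = (-1:ℂ) ^ (m - 1) * (∏ k ∈ Ico 1 m, D k) ^ 2 := by
            rw [Finset.prod_mul_distrib, Finset.prod_const, Nat.card_Ico, Finset.prod_pow]
    calc (2:ℂ) ^ (n - 1) * ∏ k ∈ Ico 1 n, lam k
        = ∏ k ∈ Ico 1 n, ((2:ℂ) * lam k) := hL.symm
      _ = (2 * lam m) * ((∏ k ∈ Ico 1 m, ((2:ℂ) * lam k)) *
            ∏ k ∈ Ico 1 m, ((2:ℂ) * lam (n - k))) := by
          rw [hsplit1, hsplit2, hrefl]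
          ring
      _ = 2 * lam m * ((-1) ^ (m - 1) * (∏ k ∈ Ico 1 m, D k) ^ 2) := by
          rw [hpair, hneg]
  -- assembly
  have hfinal : (2:ℂ) ^ (n - 2) * (∏ k ∈ Ico 1 n, lam k) =
      lam m * ((-1) ^ (m - 1) * (∏ k ∈ Ico 1 m, D k) ^ 2) := by
    apply mul_left_cancel₀ (two_ne_zero' ℂ)
    have h21 : (2:ℂ) ^ (n - 1) = 2 * 2 ^ (n - 2) := by
      rw [← pow_succ']
      congr 1
      omega
    calc (2:ℂ) * (2 ^ (n - 2) * ∏ k ∈ Ico 1 n, lam k)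
        = 2 ^ (n - 1) * ∏ k ∈ Ico 1 n, lam k := by rw [h21]; ring
      _ = 2 * lam m * ((-1) ^ (m - 1) * (∏ k ∈ Ico 1 m, D k) ^ 2) := hprod
      _ = 2 * (lam m * ((-1) ^ (m - 1) * (∏ k ∈ Ico 1 m, D k) ^ 2)) := by ring
  rw [hdet, hIq, show (n - 2) / 2 = m - 1 by omega]
  linear_combination (n : ℂ) * hfinal
end

section
/- Let p ≡ 1 (mod 4) be a prime and write p = c_p^2 + 4b_p^2 with positive integers c_p, b_p. Then for every nonsquare d ∈ F_p^×, |∑_{x∈F_p} φ(d·x^3 + x)| = 4·b_p; that is, the trace of Frobenius a_d(p) of the elliptic curve y^2 = d·x^3 + x over F_p satisfies |a_d(p)| = 4·b_p. -/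
open Finset


/-- Sum of an integer valued function invariant under a fixed-point free involution
on a stable finset is even. -/
lemma aux_two_dvd_sum {α : Type*} [DecidableEq α] (f : α → ℤ) (σ : α → α) :
    ∀ s : Finset α, (∀ x ∈ s, σ x ∈ s) → (∀ x ∈ s, σ (σ x) = x) →
      (∀ x ∈ s, σ x ≠ x) → (∀ x ∈ s, f (σ x) = f x) →
      2 ∣ ∑ x ∈ s, f x := by
  intro s
  induction s using Finset.strongInduction with
  | _ s ih =>
    intro hstab hinv hne hf
    rcases s.eq_empty_or_nonempty with rfl | ⟨x, hx⟩
    · simp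
    have hσx : σ x ∈ s := hstab x hx
    have hxne : σ x ≠ x := hne x hx
    have hpair : ({x, σ x} : Finset α) ⊆ s := by
      intro y hy
      simp only [Finset.mem_insert, Finset.mem_singleton] at hy
      rcases hy with rfl | rfl <;> assumption
    have hsplit := Finset.sum_sdiff (f := f) hpair
    set t := s \ {x, σ x} with ht
    have hmem : ∀ y, y ∈ t ↔ y ∈ s ∧ y ≠ x ∧ y ≠ σ x := by
      intro y
      simp [ht, Finset.mem_sdiff, and_assoc]
    have htsub : t ⊂ s := by
      refine Finset.ssubset_iff_of_subset (Finset.sdiff_subset) |>.mpr ?_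
      exact ⟨x, hx, by simp [ht]⟩
    have hdvd : 2 ∣ ∑ y ∈ t, f y := by
      refine ih t htsub ?_ ?_ ?_ ?_
      · intro y hy
        rw [hmem] at hy ⊢
        obtain ⟨hys, hyx, hyσx⟩ := hy
        refine ⟨hstab y hys, ?_, ?_⟩
        · intro h; exact hyσx (by rw [← h, hinv y hys])
        · intro h
          exact hyx (by
            have := congrArg σ h
            rwa [hinv y hys, hinv x hx] at this)
      · intro y hy; exact hinv y ((hmem y).1 hy).1
      · intro y hy; exact hne y ((hmem y).1 hy).1
      · intro y hy; exact hf y ((hmem y).1 hy).1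
    have hpairsum : ∑ y ∈ ({x, σ x} : Finset α), f y = f x + f (σ x) :=
      Finset.sum_pair (Ne.symm hxne)
    have : ∑ y ∈ s, f y = ∑ y ∈ t, f y + (f x + f (σ x)) := by
      rw [← hpairsum, hsplit]
    rw [this, hf x hx]
    exact dvd_add hdvd ⟨f x, (two_mul _).symm⟩

lemma aux_four_dvd_sum {α : Type*} [DecidableEq α] (f : α → ℤ) (σ τ : α → α) :
    ∀ s : Finset α, (∀ x ∈ s, σ x ∈ s) → (∀ x ∈ s, τ x ∈ s) →
      (∀ x ∈ s, σ (σ x) = x) → (∀ x ∈ s, τ (τ x) = x) →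
      (∀ x ∈ s, σ (τ x) = τ (σ x)) →
      (∀ x ∈ s, σ x ≠ x) → (∀ x ∈ s, τ x ≠ x) → (∀ x ∈ s, σ (τ x) ≠ x) →
      (∀ x ∈ s, f (σ x) = f x) → (∀ x ∈ s, f (τ x) = f x) →
      4 ∣ ∑ x ∈ s, f x := by
  intro s
  induction s using Finset.strongInduction with
  | _ s ih =>
    intro hσs hτs hσσ hττ hcomm hσne hτne hστne hfσ hfτ
    rcases s.eq_empty_or_nonempty with rfl | ⟨x, hx⟩
    · simp
    have hσx : σ x ∈ s := hσs x hx
    have hτx : τ x ∈ s := hτs x hx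
    have hστx : σ (τ x) ∈ s := hσs _ hτx
    -- pairwise distinctness
    have h1 : σ x ≠ x := hσne x hx
    have h2 : τ x ≠ x := hτne x hx
    have h3 : σ (τ x) ≠ x := hστne x hx
    have h4 : σ x ≠ τ x := by
      intro h
      exact h3 (by rw [← h, hσσ x hx]) |>.elim
    have h5 : σ x ≠ σ (τ x) := by
      intro h
      have := congrArg σ h
      rw [hσσ x hx, hσσ _ hτx] at this
      exact h2 this.symm
    have h6 : τ x ≠ σ (τ x) := fun h => hσne _ hτx h.symm
    have hquad : ({x, σ x, τ x, σ (τ x)} : Finset α) ⊆ s := by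
      intro y hy
      simp only [Finset.mem_insert, Finset.mem_singleton] at hy
      rcases hy with rfl | rfl | rfl | rfl <;> assumption
    have hsplit := Finset.sum_sdiff (f := f) hquad
    set t := s \ {x, σ x, τ x, σ (τ x)} with ht
    have hmem : ∀ y, y ∈ t ↔ y ∈ s ∧ y ≠ x ∧ y ≠ σ x ∧ y ≠ τ x ∧ y ≠ σ (τ x) := by
      intro y; simp [ht, Finset.mem_sdiff, and_assoc]
    have htsub : t ⊂ s := by
      refine Finset.ssubset_iff_of_subset (Finset.sdiff_subset) |>.mpr ?_
      exact ⟨x, hx, by simp [ht]⟩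
    have key : ∀ y ∈ t, σ y ∈ t ∧ τ y ∈ t := by
      intro y hy
      rw [hmem] at hy
      obtain ⟨hys, hy1, hy2, hy3, hy4⟩ := hy
      have hσy : σ y ∈ s := hσs y hys
      have hτy : τ y ∈ s := hτs y hys
      constructor
      · rw [hmem]
        refine ⟨hσy, ?_, ?_, ?_, ?_⟩
        · intro h; exact hy2 (by rw [← h, hσσ y hys])
        · intro h
          have := congrArg σ h; rw [hσσ y hys, hσσ x hx] at this
          exact hy1 this
        · intro h; exact hy4 (by rw [← hσσ y hys, h])
        · intro h
          have := congrArg σ h; rw [hσσ y hys, hσσ _ hτx] at this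
          exact hy3 this
      · rw [hmem]
        refine ⟨hτy, ?_, ?_, ?_, ?_⟩
        · intro h; exact hy3 (by rw [← h, hττ y hys])
        · intro h
          -- τ y = σ x ⇒ y = τ σ x = σ τ x
          have := congrArg τ h; rw [hττ y hys] at this
          rw [this] at hy4
          exact hy4 (hcomm x hx).symm
        · intro h
          have := congrArg τ h; rw [hττ y hys, hττ x hx] at this
          exact hy1 this
        · intro h
          rw [hcomm x hx] at h
          have := congrArg τ h
          rw [hττ y hys, hττ _ hσx] at this
          exact hy2 this
    have hdvd : 4 ∣ ∑ y ∈ t, f y := by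
      refine ih t htsub (fun y hy => (key y hy).1) (fun y hy => (key y hy).2) ?_ ?_ ?_ ?_ ?_ ?_ ?_ ?_ <;>
        intro y hy <;> [skip; skip; skip; skip; skip; skip; skip; skip] <;>
        first
          | exact hσσ y ((hmem y).1 hy).1
          | exact hττ y ((hmem y).1 hy).1
          | exact hcomm y ((hmem y).1 hy).1
          | exact hσne y ((hmem y).1 hy).1
          | exact hτne y ((hmem y).1 hy).1
          | exact hστne y ((hmem y).1 hy).1
          | exact hfσ y ((hmem y).1 hy).1
          | exact hfτ y ((hmem y).1 hy).1
    have hquadsum : ∑ y ∈ ({x, σ x, τ x, σ (τ x)} : Finset α), f y = 4 * f x := by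
      rw [Finset.sum_insert (by simp [h1.symm, h2.symm, h3.symm]),
        Finset.sum_insert (by simp [h4, h5]),
        Finset.sum_pair h6, hfσ x hx, hfτ x hx, hfσ _ hτx, hfτ x hx]
      ring
    have : ∑ y ∈ s, f y = ∑ y ∈ t, f y + 4 * f x := by rw [← hquadsum, hsplit]
    rw [this]
    exact dvd_add hdvd ⟨f x, rfl⟩

lemma aux_char_shift {F : Type*} [Field F] [Fintype F] [DecidableEq F]
    (hF : ringChar F ≠ 2) {c : F} (hc : c ≠ 0) :
    ∑ t : F, quadraticChar F t * quadraticChar F (t + c) = -1 := by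
  set φ := quadraticChar F with hφ
  have h0 : ∑ t : F, φ t * φ (t + c) = ∑ t ∈ Finset.univ.erase (0 : F), φ t * φ (t + c) := by
    rw [Finset.sum_erase _ (by simp [hφ])]
  have h1 : ∑ t ∈ Finset.univ.erase (0 : F), φ t * φ (t + c)
      = ∑ t ∈ Finset.univ.erase (0 : F), φ (1 + c * t⁻¹) := by
    refine Finset.sum_congr rfl fun t ht => ?_
    have htne : t ≠ 0 := Finset.ne_of_mem_erase ht
    have : t + c = t * (1 + c * t⁻¹) := by field_simp
    rw [this, map_mul, ← mul_assoc, ← sq, quadraticChar_sq_one htne, one_mul]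
  have h2 : ∑ t ∈ Finset.univ.erase (0 : F), φ (1 + c * t⁻¹)
      = ∑ w ∈ Finset.univ.erase (1 : F), φ w := by
    refine Finset.sum_bij' (fun t _ => 1 + c * t⁻¹) (fun w _ => c * (w - 1)⁻¹) ?_ ?_ ?_ ?_ ?_
    · intro t ht
      have htne : t ≠ 0 := Finset.ne_of_mem_erase ht
      simp only [Finset.mem_erase, Finset.mem_univ, and_true]
      intro h
      have : c * t⁻¹ = 0 := by linear_combination h
      rcases mul_eq_zero.1 this with h' | h'
      · exact hc h'
      · exact htne (inv_eq_zero.1 h')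
    · intro w hw
      have hwne : w ≠ 1 := Finset.ne_of_mem_erase hw
      simp only [Finset.mem_erase, Finset.mem_univ, and_true]
      intro h
      rcases mul_eq_zero.1 h with h' | h'
      · exact hc h'
      · exact hwne (by linear_combination (sub_eq_zero.1 (inv_eq_zero.1 h')))
    · intro t ht
      have htne : t ≠ 0 := Finset.ne_of_mem_erase ht
      field_simp
      rw [add_sub_cancel_left, div_self hc]
    · intro w hw
      have hwne : w ≠ 1 := Finset.ne_of_mem_erase hw
      have hw1 : w - 1 ≠ 0 := sub_ne_zero.2 hwne
      rw [mul_inv, inv_inv, ← mul_assoc, mul_inv_cancel₀ hc, one_mul]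
      field_simp
      ring
    · intro t _; rfl
  have h3 : ∑ w ∈ Finset.univ.erase (1 : F), φ w = -1 := by
    rw [Finset.sum_erase_eq_sub (Finset.mem_univ 1)]
    rw [quadraticChar_sum_zero hF]
    simp [hφ]
  rw [h0, h1, h2, h3]


lemma aux_double_sum {F : Type*} [Field F] [Fintype F] [DecidableEq F]
    (hF : ringChar F ≠ 2) (hneg : quadraticChar F (-1) = 1) :
    ∑ e : F, (∑ x : F, quadraticChar F (x ^ 3 + e * x)) ^ 2
      = 2 * (Fintype.card F : ℤ) * ((Fintype.card F : ℤ) - 1) := by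
  set φ := quadraticChar F with hφ
  have two_ne : (2 : F) ≠ 0 := Ring.two_ne_zero hF
  have hcard : ((Finset.univ.erase (0 : F)).card : ℤ) = (Fintype.card F : ℤ) - 1 := by
    rw [Finset.card_erase_of_mem (Finset.mem_univ 0), Finset.card_univ]
    have : 1 ≤ Fintype.card F := Fintype.card_pos
    omega
  -- sum of φ t ^ 2
  have hsq : ∑ t : F, φ t * φ t = (Fintype.card F : ℤ) - 1 := by
    have h1 : ∀ t : F, φ t * φ t = if t = (0 : F) then 0 else 1 := by
      intro t
      by_cases h : t = 0
      · simp [h, hφ]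
      · rw [if_neg h, ← sq, quadraticChar_sq_one h]
    rw [Finset.sum_congr rfl fun t _ => h1 t]
    rw [← Finset.sum_erase (a := (0 : F))
      (f := fun t : F => if t = (0 : F) then (0 : ℤ) else 1) Finset.univ (by simp)]
    rw [Finset.sum_congr rfl fun t ht => if_neg (Finset.ne_of_mem_erase ht)]
    rw [Finset.sum_const, nsmul_eq_mul, mul_one]
    exact hcard
  -- the key inner sum
  have hK : ∀ x y : F, (∑ e : F, φ (x ^ 2 + e) * φ (y ^ 2 + e))
      = (if y ^ 2 = x ^ 2 then (Fintype.card F : ℤ) else 0) - 1 := by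
    intro x y
    have hbij : ∑ t : F, φ t * φ (t + (y ^ 2 - x ^ 2))
        = ∑ e : F, φ (x ^ 2 + e) * φ (y ^ 2 + e) := by
      refine Fintype.sum_bijective (fun t => t - x ^ 2)
        (Equiv.subRight (x ^ 2)).bijective _ _ ?_
      intro t
      have h1 : x ^ 2 + (t - x ^ 2) = t := by ring
      have h2 : y ^ 2 + (t - x ^ 2) = t + (y ^ 2 - x ^ 2) := by ring
      simp only [h1, h2]
    rw [← hbij]
    by_cases hxy : y ^ 2 = x ^ 2
    · rw [if_pos hxy, hxy, sub_self]
      simp only [add_zero]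
      exact hsq
    · rw [if_neg hxy, zero_sub]
      exact aux_char_shift hF (sub_ne_zero.2 hxy)
  -- inner y-sum
  have hky : ∀ x : F, (∑ y : F, if y ^ 2 = x ^ 2 then φ x * φ y else 0)
      = if x = (0 : F) then 0 else 2 := by
    intro x
    by_cases hx : x = 0
    · simp [hx, hφ]
    · rw [if_neg hx]
      rw [← Finset.sum_filter]
      have hfil : Finset.univ.filter (fun y : F => y ^ 2 = x ^ 2) = {x, -x} := by
        ext y
        simp only [Finset.mem_filter, Finset.mem_univ, true_and, Finset.mem_insert,
          Finset.mem_singleton]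
        constructor
        · intro h
          have : (y - x) * (y + x) = 0 := by linear_combination h
          rcases mul_eq_zero.1 this with h' | h'
          · exact Or.inl (sub_eq_zero.1 h')
          · exact Or.inr (eq_neg_of_add_eq_zero_left h')
        · rintro (rfl | rfl) <;> ring
      have hxne : x ≠ -x := by
        intro h
        apply hx
        have : 2 * x = 0 := by linear_combination h
        rcases mul_eq_zero.1 this with h' | h'
        · exact absurd h' two_ne
        · exact h'
      rw [hfil, Finset.sum_pair hxne]
      have hneg' : φ (-x) = φ x := by
        rw [show (-x : F) = -1 * x by ring, map_mul, hneg, one_mul]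
      rw [hneg', ← sq, quadraticChar_sq_one hx]
      ring
  have hsx : (∑ x : F, if x = (0 : F) then (0 : ℤ) else 2)
      = 2 * ((Fintype.card F : ℤ) - 1) := by
    rw [← Finset.sum_erase (a := (0 : F))
      (f := fun x : F => if x = (0 : F) then (0 : ℤ) else 2) Finset.univ (by simp)]
    rw [Finset.sum_congr rfl fun t ht => if_neg (Finset.ne_of_mem_erase ht)]
    rw [Finset.sum_const, nsmul_eq_mul, hcard]
    ring
  -- main computation
  have hsplit : ∀ (e x : F), φ (x ^ 3 + e * x) = φ x * φ (x ^ 2 + e) := by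
    intro e x
    rw [← map_mul]
    congr 1
    ring
  calc ∑ e : F, (∑ x : F, φ (x ^ 3 + e * x)) ^ 2
      = ∑ e : F, ∑ x : F, ∑ y : F, (φ x * φ (x ^ 2 + e)) * (φ y * φ (y ^ 2 + e)) := by
        refine Finset.sum_congr rfl fun e _ => ?_
        rw [sq, Finset.sum_mul_sum]
        exact Finset.sum_congr rfl fun x _ => Finset.sum_congr rfl fun y _ => by
          rw [hsplit e x, hsplit e y]
    _ = ∑ x : F, ∑ y : F, ∑ e : F, (φ x * φ (x ^ 2 + e)) * (φ y * φ (y ^ 2 + e)) := by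
        rw [Finset.sum_comm]
        exact Finset.sum_congr rfl fun x _ => Finset.sum_comm
    _ = ∑ x : F, ∑ y : F, φ x * φ y * ∑ e : F, φ (x ^ 2 + e) * φ (y ^ 2 + e) := by
        refine Finset.sum_congr rfl fun x _ => Finset.sum_congr rfl fun y _ => ?_
        rw [Finset.mul_sum]
        exact Finset.sum_congr rfl fun e _ => by ring
    _ = ∑ x : F, ∑ y : F, ((Fintype.card F : ℤ) * (if y ^ 2 = x ^ 2 then φ x * φ y else 0)
          - φ x * φ y) := by
        refine Finset.sum_congr rfl fun x _ => Finset.sum_congr rfl fun y _ => ?_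
        rw [hK x y]
        by_cases h : y ^ 2 = x ^ 2 <;> simp [h] <;> ring
    _ = (Fintype.card F : ℤ) * (∑ x : F, ∑ y : F, if y ^ 2 = x ^ 2 then φ x * φ y else 0)
          - (∑ x : F, φ x) * (∑ y : F, φ y) := by
        rw [Finset.sum_mul_sum, Finset.mul_sum]
        rw [← Finset.sum_sub_distrib]
        refine Finset.sum_congr rfl fun x _ => ?_
        rw [Finset.mul_sum, ← Finset.sum_sub_distrib]
    _ = 2 * (Fintype.card F : ℤ) * ((Fintype.card F : ℤ) - 1) := by
        rw [Finset.sum_congr rfl fun x _ => hky x, hsx, quadraticChar_sum_zero hF]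
        ring

lemma aux_reindex {F : Type*} [Field F] [Fintype F] [DecidableEq F] {d : F} (hd : d ≠ 0) :
    ∑ x : F, quadraticChar F (d * x ^ 3 + x) = ∑ x : F, quadraticChar F (x ^ 3 + d * x) := by
  refine (Fintype.sum_bijective (fun u : F => d⁻¹ * u)
    (Equiv.mulLeft₀ d⁻¹ (inv_ne_zero hd)).bijective _ _ ?_).symm
  intro u
  have harg : d * (d⁻¹ * u) ^ 3 + d⁻¹ * u = (d⁻¹) ^ 2 * (u ^ 3 + d * u) := by
    field_simp
  rw [harg, map_mul, quadraticChar_sq_one' (inv_ne_zero hd), one_mul]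

lemma aux_scale {F : Type*} [Field F] [Fintype F] [DecidableEq F] {t : F} (ht : t ≠ 0) (e : F) :
    ∑ x : F, quadraticChar F (x ^ 3 + (t ^ 2 * e) * x)
      = quadraticChar F t * ∑ x : F, quadraticChar F (x ^ 3 + e * x) := by
  rw [Finset.mul_sum]
  refine (Fintype.sum_bijective (fun x : F => t * x)
    (Equiv.mulLeft₀ t ht).bijective _ _ ?_).symm
  intro x
  have harg : (t * x) ^ 3 + (t ^ 2 * e) * (t * x) = t ^ 2 * (t * (x ^ 3 + e * x)) := by ring
  rw [harg, map_mul, map_mul, quadraticChar_sq_one' ht, one_mul]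

lemma aux_J_zero {F : Type*} [Field F] [Fintype F] [DecidableEq F] (hF : ringChar F ≠ 2) :
    ∑ x : F, quadraticChar F (x ^ 3 + 0 * x) = 0 := by
  have h : ∀ x : F, quadraticChar F (x ^ 3 + 0 * x) = quadraticChar F x := by
    intro x
    by_cases hx : x = 0
    · simp [hx]
    · have : x ^ 3 + 0 * x = x * x ^ 2 := by ring
      rw [this, map_mul, quadraticChar_sq_one' hx, mul_one]
  rw [Finset.sum_congr rfl fun x _ => h x]
  exact quadraticChar_sum_zero hF
lemma aux_endgame (p c b : ℕ) (hp : p.Prime) (hp4 : p % 4 = 1) (hc : 0 < c) (hb : 0 < b)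
    (hcb : p = c ^ 2 + 4 * b ^ 2) (a m : ℤ)
    (hkey : (2 * a) ^ 2 + (4 * m) ^ 2 = 4 * (p : ℤ)) :
    |4 * m| = 4 * (b : ℤ) := by
  have hAM : a ^ 2 + 4 * m ^ 2 = (p : ℤ) := by 
    have h4 : 4 * (a ^ 2 + 4 * m ^ 2) = 4 * (p : ℤ) := by linear_combination hkey
    exact mul_left_cancel₀ (show (4:ℤ) ≠ 0 by norm_num) h4
  have hC : (c : ℤ) ^ 2 + 4 * (b : ℤ) ^ 2 = (p : ℤ) := by exact_mod_cast hcb.symm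
  have hpodd : ¬ Even (p : ℤ) := by
    intro hev
    have h2 : Even p := by exact_mod_cast hev
    rw [Nat.even_iff] at h2
    omega
  have haodd : Odd a := by
    rcases Int.even_or_odd a with ⟨k, hk⟩ | h
    · exfalso
      apply hpodd
      exact ⟨2 * k ^ 2 + 2 * m ^ 2, by linear_combination -hAM + (a + 2 * k) * hk⟩
    · exact h
  have hcodd : Odd (c : ℤ) := by
    rcases Int.even_or_odd (c : ℤ) with ⟨k, hk⟩ | h
    · exfalso
      apply hpodd
      exact ⟨2 * k ^ 2 + 2 * (b : ℤ) ^ 2, by linear_combination -hC + ((c : ℤ) + 2 * k) * hk⟩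
    · exact h
  set A : ℤ := |a| with hAdef
  set M : ℤ := |m| with hMdef
  set C : ℤ := (c : ℤ) with hCdef
  set B : ℤ := (b : ℤ) with hBdef
  have hA2 : A ^ 2 = a ^ 2 := sq_abs a
  have hM2 : M ^ 2 = m ^ 2 := sq_abs m
  have hAM' : A ^ 2 + 4 * M ^ 2 = (p : ℤ) := by rw [hA2, hM2]; exact hAM
  have hAodd : Odd A := by
    rcases abs_choice a with h | h
    · rw [hAdef, h]; exact haodd
    · rw [hAdef, h]; exact haodd.neg
  have hA1 : 1 ≤ A := by
    have h0 : 0 ≤ A := abs_nonneg a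
    have hne : A ≠ 0 := by
      intro h
      rw [h] at hAodd
      exact (Int.not_odd_iff_even.mpr Even.zero) hAodd
    omega
  have hM0 : 0 ≤ M := abs_nonneg m
  have hC1 : 1 ≤ C := by rw [hCdef]; exact_mod_cast hc
  have hB1 : 1 ≤ B := by rw [hBdef]; exact_mod_cast hb
  have hp0 : 0 < (p : ℤ) := by exact_mod_cast hp.pos
  have hid1 : (A * C + 4 * M * B) ^ 2 + 4 * (A * B - M * C) ^ 2 = (p : ℤ) ^ 2 := by
    linear_combination (C ^ 2 + 4 * B ^ 2) * hAM' + (p : ℤ) * hC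
  have hid2 : (A * C - 4 * M * B) ^ 2 + 4 * (A * B + M * C) ^ 2 = (p : ℤ) ^ 2 := by
    linear_combination (C ^ 2 + 4 * B ^ 2) * hAM' + (p : ℤ) * hC
  have hdvd : (p : ℤ) ∣ (A * C + 4 * M * B) * (A * C - 4 * M * B) :=
    ⟨A ^ 2 + C ^ 2 - (p : ℤ), by
      linear_combination (-(4 * B ^ 2)) * hAM' + (A ^ 2 - (p : ℤ)) * hC⟩
  have hpZ : Prime (p : ℤ) := Nat.prime_iff_prime_int.mp hp
  have hBM : B = M := by
    rcases (hpZ.dvd_mul.mp hdvd) with h | h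
    · have hpos : 0 < A * C + 4 * M * B := by
        have h1 : 0 < A * C := mul_pos (by linarith) (by linarith)
        have h2 : 0 ≤ 4 * M * B := by
          have := mul_nonneg (mul_nonneg (by norm_num : (0:ℤ) ≤ 4) hM0) (by linarith : (0:ℤ) ≤ B)
          linarith
        linarith
      have hle : (p : ℤ) ≤ A * C + 4 * M * B := Int.le_of_dvd hpos h
      have hsqle : (A * C + 4 * M * B) ^ 2 ≤ (p : ℤ) ^ 2 := by
        linarith [sq_nonneg (A * B - M * C), hid1]
      have hle2 : A * C + 4 * M * B ≤ (p : ℤ) := by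
        by_contra hcon
        push_neg at hcon
        have h1 : (p : ℤ) ^ 2 < (A * C + 4 * M * B) ^ 2 := by
          have h2 : 0 < ((A * C + 4 * M * B) - (p:ℤ)) * ((A * C + 4 * M * B) + (p:ℤ)) :=
            mul_pos (by linarith) (by linarith)
          nlinarith [h2]
        linarith
      have heq : A * C + 4 * M * B = (p : ℤ) := le_antisymm hle2 hle
      rw [heq] at hid1
      have hzero : (A * B - M * C) ^ 2 = 0 := by linarith [hid1]
      have hABMC : A * B - M * C = 0 := by
        exact pow_eq_zero_iff (n := 2) (by norm_num) |>.mp hzero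
      have hsq : B ^ 2 * (p : ℤ) = M ^ 2 * (p : ℤ) := by
        linear_combination (-(B ^ 2)) * hAM' + M ^ 2 * hC + (A * B + M * C) * hABMC
      have hB2M2 : B ^ 2 = M ^ 2 := mul_right_cancel₀ (ne_of_gt hp0) hsq
      have hfac : (B - M) * (B + M) = 0 := by linear_combination hB2M2
      rcases mul_eq_zero.mp hfac with h' | h'
      · linarith [sub_eq_zero.mp h']
      · exfalso; linarith
    · exfalso
      by_cases hk0 : A * C - 4 * M * B = 0
      · have hACodd : Odd (A * C) := hAodd.mul hcodd
        have hACeven : Even (A * C) := by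
          have hAC : A * C = 4 * M * B := by linarith
          exact ⟨2 * M * B, by rw [hAC]; ring⟩
        exact (Int.not_odd_iff_even.mpr hACeven) hACodd
      · have h1 : (p : ℤ) ≤ |A * C - 4 * M * B| :=
          Int.le_of_dvd (abs_pos.mpr hk0) ((dvd_abs _ _).mpr h)
        have h2 : (A * C - 4 * M * B) ^ 2 = |A * C - 4 * M * B| ^ 2 := (sq_abs _).symm
        have hk2 : (p : ℤ) ^ 2 ≤ (A * C - 4 * M * B) ^ 2 := by
          rw [h2]
          exact pow_le_pow_left₀ (le_of_lt hp0) h1 2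
        have hABpos : 1 ≤ A * B := by
          have := mul_le_mul hA1 hB1 zero_le_one (by linarith : (0:ℤ) ≤ A)
          linarith
        have hMC0 : 0 ≤ M * C := mul_nonneg hM0 (by linarith)
        have h3 : 1 ≤ A * B + M * C := by linarith
        have h4 : 1 ≤ (A * B + M * C) ^ 2 := by
          have := mul_le_mul h3 h3 zero_le_one (by linarith : (0:ℤ) ≤ A * B + M * C)
          rw [sq]
          linarith [this]
        linarith [hid2, hk2, h4]
  rw [abs_mul, show |(4 : ℤ)| = 4 by norm_num, ← hMdef, ← hBM, hBdef]

/-- Let `p ≡ 1 (mod 4)` be a prime and write `p = c_p^2 + 4 b_p^2` with positive integers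
`c_p, b_p`.  Then for every nonsquare `d ∈ F_p^×`,
`|∑_{x ∈ F_p} φ(d x^3 + x)| = 4 b_p`, where `φ` is the quadratic character of `F_p`;
that is, the trace of Frobenius `a_d(p)` of the elliptic curve `y^2 = d x^3 + x` over `F_p`
satisfies `|a_d(p)| = 4 b_p`. -/
theorem stmt18 (p : ℕ) [Fact (Nat.Prime p)] (hp4 : p % 4 = 1)
    (c b : ℕ) (hc : 0 < c) (hb : 0 < b) (hcb : p = c ^ 2 + 4 * b ^ 2) :
    ∀ d : ZMod p, d ≠ 0 → ¬ IsSquare d →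
      |∑ x : ZMod p, quadraticChar (ZMod p) (d * x ^ 3 + x)| = 4 * (b : ℤ) := by
  intro d hd0 hdns
  have hp : p.Prime := Fact.out
  have hp2 : p ≠ 2 := by omega
  have hp5 : 5 ≤ p := by
    have := hp.two_le
    rcases Nat.lt_or_ge p 5 with h | h
    · interval_cases p <;> omega
    · exact h
  have hchar : ringChar (ZMod p) ≠ 2 := by
    rw [ZMod.ringChar_zmod_n]; exact hp2
  have two_ne : (2 : ZMod p) ≠ 0 := Ring.two_ne_zero hchar
  have hcardF : Fintype.card (ZMod p) = p := ZMod.card p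
  have hneg0 : (-1 : ZMod p) ≠ 0 := by
    intro h
    have : (1 : ZMod p) = 0 := by linear_combination -h
    exact one_ne_zero this
  have hneg1 : quadraticChar (ZMod p) (-1) = 1 :=
    (quadraticChar_one_iff_isSquare hneg0).mpr
      (ZMod.exists_sq_eq_neg_one_iff.mpr (by omega))
  set φ : MulChar (ZMod p) ℤ := quadraticChar (ZMod p) with hφ
  set J : ZMod p → ℤ := fun e => ∑ x : ZMod p, φ (x ^ 3 + e * x) with hJ
  have hφd : φ d = -1 := quadraticChar_neg_one_iff_not_isSquare.mpr hdns
  -- classification of (J e)^2 by quadratic class of e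
  have hclass : ∀ e : ZMod p, e ≠ 0 →
      2 * (J e) ^ 2 = (1 + φ e) * (J 1) ^ 2 + (1 - φ e) * (J d) ^ 2 := by
    intro e he
    by_cases hsq : IsSquare e
    · obtain ⟨t, rfl⟩ := hsq
      have ht : t ≠ 0 := by intro h; rw [h] at he; simp at he
      have h1 : t * t = t ^ 2 * 1 := by ring
      have h2 : J (t * t) = φ t * J 1 := by
        simp only [hJ]; rw [h1]; exact aux_scale ht 1
      have h3 : φ (t * t) = 1 := by rw [map_mul, ← sq, quadraticChar_sq_one ht]
      rw [h2, h3, mul_pow, quadraticChar_sq_one ht]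
      ring
    · have hφe : φ e = -1 := quadraticChar_neg_one_iff_not_isSquare.mpr hsq
      have hφdinv : φ d⁻¹ = -1 := by
        have h1 : φ d * φ d⁻¹ = 1 := by
          rw [← map_mul, mul_inv_cancel₀ hd0, map_one]
        rw [hφd] at h1; linarith
      have hsq' : IsSquare (e * d⁻¹) := by
        apply (quadraticChar_one_iff_isSquare (mul_ne_zero he (inv_ne_zero hd0))).mp
        rw [map_mul, hφe, hφdinv]; ring
      obtain ⟨t, ht⟩ := hsq'
      have htne : t ≠ 0 := by
        rintro rfl
        rw [mul_zero] at ht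
        exact (mul_ne_zero he (inv_ne_zero hd0)) ht
      have he' : e = t ^ 2 * d := by
        have : e * d⁻¹ * d = t * t * d := by rw [← ht]
        rw [inv_mul_cancel_right₀ hd0] at this
        rw [this]; ring
      have h2 : J e = φ t * J d := by
        simp only [hJ]; rw [he']; exact aux_scale htne d
      rw [h2, hφe, mul_pow, quadraticChar_sq_one htne]
      ring
  -- sum over all e
  have hEsum : ∑ e : ZMod p, (J e) ^ 2 = 2 * (p : ℤ) * ((p : ℤ) - 1) := by
    have := aux_double_sum (F := ZMod p) hchar hneg1
    rw [hcardF] at this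
    simpa only [hJ, hφ] using this
  have hJ0 : J 0 = 0 := by
    simp only [hJ]
    exact aux_J_zero hchar
  have hsum4p : (J 1) ^ 2 + (J d) ^ 2 = 4 * (p : ℤ) := by
    have key : ∑ e ∈ Finset.univ.erase (0 : ZMod p), 2 * (J e) ^ 2
        = ∑ e ∈ Finset.univ.erase (0 : ZMod p),
            ((1 + φ e) * (J 1) ^ 2 + (1 - φ e) * (J d) ^ 2) :=
      Finset.sum_congr rfl fun e he => hclass e (Finset.ne_of_mem_erase he)
    have hL : ∑ e ∈ Finset.univ.erase (0 : ZMod p), 2 * (J e) ^ 2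
        = 4 * (p : ℤ) * ((p : ℤ) - 1) := by
      rw [Finset.sum_erase _ (by rw [hJ0]; ring)]
      rw [← Finset.mul_sum, hEsum]
      ring
    have hφ0 : ∑ e ∈ Finset.univ.erase (0 : ZMod p), φ e = 0 := by
      rw [Finset.sum_erase _ (by simp [hφ])]
      exact quadraticChar_sum_zero hchar
    have hcarde : ((Finset.univ.erase (0 : ZMod p)).card : ℤ) = (p : ℤ) - 1 := by
      rw [Finset.card_erase_of_mem (Finset.mem_univ 0), Finset.card_univ, hcardF]
      have : 1 ≤ p := hp.one_lt.le
      omega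
    have hR : ∑ e ∈ Finset.univ.erase (0 : ZMod p),
        ((1 + φ e) * (J 1) ^ 2 + (1 - φ e) * (J d) ^ 2)
        = ((p : ℤ) - 1) * ((J 1) ^ 2 + (J d) ^ 2) := by
      have expand : ∀ e : ZMod p,
          (1 + φ e) * (J 1) ^ 2 + (1 - φ e) * (J d) ^ 2
          = ((J 1) ^ 2 + (J d) ^ 2) + φ e * ((J 1) ^ 2 - (J d) ^ 2) := by
        intro e; ring
      rw [Finset.sum_congr rfl fun e _ => expand e, Finset.sum_add_distrib,
        Finset.sum_const, ← Finset.sum_mul, hφ0, nsmul_eq_mul, hcarde]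
      ring
    have hpe : ((p : ℤ) - 1) ≠ 0 := by
      have : (2 : ℤ) ≤ (p : ℤ) := by exact_mod_cast hp.two_le
      linarith
    have : ((p : ℤ) - 1) * ((J 1) ^ 2 + (J d) ^ 2)
        = ((p : ℤ) - 1) * (4 * (p : ℤ)) := by
      rw [← hR, ← key, hL]; ring
    exact mul_left_cancel₀ hpe this
  -- 2 ∣ J 1
  have hJ1even : (2 : ℤ) ∣ J 1 := by
    have hrw : J 1 = ∑ x ∈ Finset.univ.erase (0 : ZMod p), φ (x ^ 3 + 1 * x) := by
      simp only [hJ]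
      rw [Finset.sum_erase _ (by norm_num [hφ])]
    rw [hrw]
    refine aux_two_dvd_sum _ (fun x : ZMod p => -x) _ ?_ ?_ ?_ ?_
    · intro x hx
      rw [Finset.mem_erase] at hx ⊢
      exact ⟨neg_ne_zero.2 hx.1, Finset.mem_univ _⟩
    · intro x _; exact neg_neg x
    · intro x hx
      rw [Finset.mem_erase] at hx
      intro h
      apply hx.1
      have h2 : 2 * x = 0 := by linear_combination -h
      rcases mul_eq_zero.1 h2 with h' | h'
      · exact absurd h' two_ne
      · exact h'
    · intro x _
      have harg : (-x) ^ 3 + 1 * (-x) = -1 * (x ^ 3 + 1 * x) := by ring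
      rw [harg, map_mul, hneg1, one_mul]
  -- 4 ∣ J d
  obtain ⟨i, hi⟩ : IsSquare (-1 : ZMod p) := ZMod.exists_sq_eq_neg_one_iff.mpr (by omega)
  have hJd4 : (4 : ℤ) ∣ J d := by
    have hrw : J d = ∑ x ∈ Finset.univ.erase (0 : ZMod p), φ (x ^ 3 + d * x) := by
      simp only [hJ]
      rw [Finset.sum_erase _ (by norm_num [hφ])]
    rw [hrw]
    refine aux_four_dvd_sum _ (fun x : ZMod p => d * x⁻¹) (fun x : ZMod p => -x) _
      ?_ ?_ ?_ ?_ ?_ ?_ ?_ ?_ ?_ ?_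
    · intro x hx
      rw [Finset.mem_erase] at hx ⊢
      exact ⟨mul_ne_zero hd0 (inv_ne_zero hx.1), Finset.mem_univ _⟩
    · intro x hx
      rw [Finset.mem_erase] at hx ⊢
      exact ⟨neg_ne_zero.2 hx.1, Finset.mem_univ _⟩
    · intro x hx
      rw [Finset.mem_erase] at hx
      obtain ⟨hx1, -⟩ := hx
      field_simp
    · intro x _; exact neg_neg x
    · intro x hx
      rw [Finset.mem_erase] at hx
      rw [inv_neg, mul_neg]
    · intro x hx
      rw [Finset.mem_erase] at hx
      obtain ⟨hx1, -⟩ := hx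
      intro h
      apply hdns
      refine ⟨x, ?_⟩
      have hxx : d * x⁻¹ * x = x * x := by rw [h]
      rwa [inv_mul_cancel_right₀ hx1] at hxx
    · intro x hx
      rw [Finset.mem_erase] at hx
      obtain ⟨hx1, -⟩ := hx
      intro h
      apply hx1
      have h2 : 2 * x = 0 := by linear_combination -h
      rcases mul_eq_zero.1 h2 with h' | h'
      · exact absurd h' two_ne
      · exact h'
    · intro x hx
      rw [Finset.mem_erase] at hx
      obtain ⟨hx1, -⟩ := hx
      intro h
      apply hdns
      refine ⟨i * x, ?_⟩
      have hxx : d * (-x)⁻¹ * (-x) = x * (-x) := by rw [h]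
      rw [inv_mul_cancel_right₀ (neg_ne_zero.2 hx1)] at hxx
      rw [hxx]
      linear_combination (x * x) * hi
    · intro x hx
      rw [Finset.mem_erase] at hx
      obtain ⟨hx1, -⟩ := hx
      have hne : d * x⁻¹ * x⁻¹ ≠ 0 :=
        mul_ne_zero (mul_ne_zero hd0 (inv_ne_zero hx1)) (inv_ne_zero hx1)
      have harg : (d * x⁻¹) ^ 3 + d * (d * x⁻¹)
          = (d * x⁻¹ * x⁻¹) ^ 2 * (x ^ 3 + d * x) := by
        field_simp
        ring
      rw [harg, map_mul, quadraticChar_sq_one' hne, one_mul]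
    · intro x _
      have harg : (-x) ^ 3 + d * (-x) = -1 * (x ^ 3 + d * x) := by ring
      rw [harg, map_mul, hneg1, one_mul]
  -- endgame
  obtain ⟨a, ha⟩ := hJ1even
  obtain ⟨m, hm⟩ := hJd4
  have hkey : (2 * a) ^ 2 + (4 * m) ^ 2 = 4 * (p : ℤ) := by
    rw [← ha, ← hm]; exact hsum4p
  have hgoal : ∑ x : ZMod p, φ (d * x ^ 3 + x) = J d := by
    simp only [hJ]
    exact aux_reindex hd0
  rw [hgoal, hm]
  exact aux_endgame p c b hp hp4 hc hb hcb a m hkey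
end
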